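/- arXiv:1203.4611 — 7 statements merged into one kernel-verified Lean document; each statement's English description precedes it below -/
import Mathlib

section
/- If n and r are positive integers with n ≥ r+1 and nr is even, then there exists an r-regular simple graph on n vertices. -/
/-!
A circulant graph on `ZMod n` whose jump set `s` is closed under negation and avoids `0` is
`#s`-regular, so it suffices to find such an `s` with `#s = r`. For `r = 2k` take the nonzero
elements of `{-k, …, k}`. For `r = 2k + 1` the parity hypothesis forces `n = 2m`, and the
`2k + 1` consecutive residues centred at `m` work: they are closed under negation because `2m = 0`,
and `k < m` keeps `0` out of them.
-/

open Finset

namespace SimpleGraph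

variable {G : Type*} [AddGroup G]

theorem circulantGraph_adj_iff_of_neg_mem {s : Set G} (hs : ∀ x ∈ s, -x ∈ s) (h0 : 0 ∉ s)
    {u v : G} : (circulantGraph s).Adj u v ↔ v - u ∈ s := by
  rw [circulantGraph_adj]
  refine ⟨fun ⟨_, h⟩ => h.elim (fun h => by simpa using hs _ h) id,
    fun h => ⟨?_, .inr h⟩⟩
  rintro rfl
  exact h0 (by simpa using h)

theorem circulantGraph_isRegularOfDegree [Fintype G] (s : Finset G) (hs : ∀ x ∈ s, -x ∈ s)
    (h0 : 0 ∉ s) [hG : (circulantGraph (s : Set G)).LocallyFinite] :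
    (circulantGraph (s : Set G)).IsRegularOfDegree #s := by
  intro v
  have hnbr : (circulantGraph (s : Set G)).neighborFinset v = s.map (addRightEmbedding v) := by
    ext w
    rw [mem_neighborFinset, circulantGraph_adj_iff_of_neg_mem (by simpa using hs) h0]
    simp only [mem_map, addRightEmbedding_apply]
    exact ⟨fun h => ⟨_, h, sub_add_cancel w v⟩, by rintro ⟨a, ha, rfl⟩; simpa using ha⟩
  rw [← card_neighborFinset_eq_degree, hnbr, card_map]

end SimpleGraph

namespace ZMod

variable {n : ℕ}

theorem eq_zero_of_intCast_eq_zero_of_abs_lt {a : ℤ} (ha : (a : ZMod n) = 0) (h : |a| < n) :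
    a = 0 :=
  Int.eq_zero_of_abs_lt_dvd ((intCast_zmod_eq_zero_iff_dvd a n).1 ha) h

noncomputable def centeredInterval (c : ZMod n) (k : ℕ) : Finset (ZMod n) :=
  (Icc (-(k : ℤ)) k).image fun j : ℤ => c + (j : ZMod n)

theorem mem_centeredInterval {c x : ZMod n} {k : ℕ} :
    x ∈ centeredInterval c k ↔ ∃ j : ℤ, -(k : ℤ) ≤ j ∧ j ≤ k ∧ c + j = x := by
  simp only [centeredInterval, mem_image, mem_Icc, and_assoc]

theorem neg_mem_centeredInterval {c x : ZMod n} {k : ℕ} (hc : c + c = 0)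
    (hx : x ∈ centeredInterval c k) : -x ∈ centeredInterval c k := by
  obtain ⟨j, hj₁, hj₂, rfl⟩ := mem_centeredInterval.1 hx
  refine mem_centeredInterval.2 ⟨-j, by omega, by omega, ?_⟩
  rw [neg_add, neg_eq_of_add_eq_zero_left hc, Int.cast_neg]

theorem card_centeredInterval (c : ZMod n) {k : ℕ} (hk : 2 * k < n) :
    #(centeredInterval c k) = 2 * k + 1 := by
  rw [centeredInterval, card_image_of_injOn, Int.card_Icc]
  · omega
  intro i hi j hj hij
  simp only [coe_Icc, Set.mem_Icc] at hi hj
  have h : ((i - j : ℤ) : ZMod n) = 0 := by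
    push_cast
    simpa [sub_eq_zero] using hij
  have := eq_zero_of_intCast_eq_zero_of_abs_lt h (by rw [abs_lt]; omega)
  omega

theorem zero_mem_centeredInterval_zero (k : ℕ) : (0 : ZMod n) ∈ centeredInterval 0 k :=
  mem_centeredInterval.2 ⟨0, by omega, by omega, by simp⟩

theorem zero_notMem_centeredInterval_half {m k : ℕ} (hm : 2 * m = n) (hk : k < m) :
    (0 : ZMod n) ∉ centeredInterval (m : ZMod n) k := by
  intro h
  obtain ⟨j, hj₁, hj₂, hj⟩ := mem_centeredInterval.1 h
  have h' : ((m + j : ℤ) : ZMod n) = 0 := by push_cast; exact hj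
  have := eq_zero_of_intCast_eq_zero_of_abs_lt h' (by rw [abs_lt]; omega)
  omega

theorem exists_finset_neg_mem_card_eq {r : ℕ} (hr : r < n) (he : Even (n * r)) :
    ∃ s : Finset (ZMod n), (∀ x ∈ s, -x ∈ s) ∧ 0 ∉ s ∧ #s = r := by
  obtain ⟨k, rfl | rfl⟩ := Nat.even_or_odd' r
  · refine ⟨(centeredInterval 0 k).erase 0, fun x hx => ?_, notMem_erase 0 _, ?_⟩
    · obtain ⟨hx₀, hx⟩ := mem_erase.1 hx
      exact mem_erase.2 ⟨neg_ne_zero.2 hx₀, neg_mem_centeredInterval (add_zero 0) hx⟩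
    · rw [card_erase_of_mem (zero_mem_centeredInterval_zero k), card_centeredInterval 0 (by omega)]
      rfl
  · obtain ⟨m, hm⟩ : Even n := (Nat.even_mul.1 he).resolve_right (by simp)
    have hc : (m : ZMod n) + m = 0 := by rw [← Nat.cast_add, ← hm, ZMod.natCast_self]
    exact ⟨centeredInterval m k, fun x => neg_mem_centeredInterval hc,
      zero_notMem_centeredInterval_half (by omega) (by omega), card_centeredInterval _ (by omega)⟩

end ZMod

open SimpleGraph
open scoped Classical

theorem stmt0_general (n r : ℕ) (hnr : r + 1 ≤ n)
    (he : Even (n * r)) :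
    ∃ G : SimpleGraph (Fin n), G.IsRegularOfDegree r := by
  obtain ⟨m, rfl⟩ : ∃ m, n = m + 1 := ⟨n - 1, by omega⟩
  obtain ⟨s, hs, h0, rfl⟩ := ZMod.exists_finset_neg_mem_card_eq (n := m + 1) (by omega) he
  -- `ZMod (m + 1)` is `Fin (m + 1)` by definition
  exact ⟨circulantGraph (s : Set (ZMod (m + 1))),
    circulantGraph_isRegularOfDegree (hG := _) s hs h0⟩

/-- If n and r are positive integers with n ≥ r+1 and nr is even,
then there exists an r-regular simple graph on n vertices. -/
theorem stmt0 (n r : ℕ) (hn : 0 < n) (hr : 0 < r) (hnr : r + 1 ≤ n)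
    (he : Even (n * r)) :
    ∃ G : SimpleGraph (Fin n), G.IsRegularOfDegree r :=
  stmt0_general n r hnr he
end

section
/- If r and n are both such that n ≥ r+2 and n and r are both odd, then the sequence consisting of n-1 copies of r together with one copy of r-1 is graphic. -/
open SimpleGraph
open scoped Classical

/-- A sequence of nonnegative integers is graphic if it is the degree sequence
of some simple graph. -/
def IsGraphic {n : ℕ} (d : Fin n → ℕ) : Prop :=
  ∃ G : SimpleGraph (Fin n), ∀ v, G.degree v = d v

/-!
Write `n = 2m + 1` and `r = 2k + 1`. On `Fin n`, viewed as `ℤ/n`, the circulant graph with jumps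
`±1, …, ±k` is `2k`-regular. The matching `i ↔ i + m` (`i < m`) covers every vertex except `n - 1`,
and its edges have jump `±m`, which is not among `±1, …, ±k` since `k < m < n - k`. The union of the
two graphs therefore has degree `2k + 1 = r` everywhere except at `n - 1`, where it is `2k = r - 1`.
-/

open Finset
open scoped Pointwise
open Fin.NatCast

namespace SimpleGraph

theorem degree_sup_of_disjoint {V : Type*} {G H : SimpleGraph V} (h : Disjoint G H) (v : V)
    [Fintype (G.neighborSet v)] [Fintype (H.neighborSet v)] [Fintype ((G ⊔ H).neighborSet v)] :
    (G ⊔ H).degree v = G.degree v + H.degree v := by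
  rw [← card_neighborFinset_eq_degree, neighborFinset_sup_of_disjoint (v := v) (h := h),
    card_disjUnion]
  rfl

theorem degree_circulantGraph {A : Type*} [AddGroup A] [DecidableEq A] {s : Finset A}
    (hs : (0 : A) ∉ s) (v : A) [Fintype ((circulantGraph (s : Set A)).neighborSet v)] :
    (circulantGraph (s : Set A)).degree v = #(s ∪ -s) := by
  suffices (circulantGraph (s : Set A)).neighborFinset v = (s ∪ -s).map (addRightEmbedding v) by
    rw [← card_neighborFinset_eq_degree, this, card_map]
  ext w
  obtain ⟨d, rfl⟩ : ∃ d, w = d + v := ⟨w - v, by simp⟩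
  simp only [mem_neighborFinset, circulantGraph_adj, right_eq_add, sub_add_cancel_right,
    SetLike.mem_coe, add_sub_cancel_right, mem_map, mem_union, mem_neg', addRightEmbedding_apply,
    add_left_inj, exists_eq_right]
  exact ⟨fun h => h.2.symm, fun h => ⟨by rintro rfl; simp_all, h.symm⟩⟩

end SimpleGraph

namespace Fin

variable {n : ℕ} [NeZero n]

theorem natCast_ne_neg_natCast {a b : ℕ} (hab : 0 < a + b) (hn : a + b < n) :
    (a : Fin n) ≠ -(b : Fin n) := by
  rw [Ne, eq_neg_iff_add_eq_zero, ← Nat.cast_add, natCast_eq_zero]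
  exact fun h => hab.ne' (Nat.eq_zero_of_dvd_of_lt h hn)

theorem natCast_injOn : Set.InjOn (fun a : ℕ => (a : Fin n)) (Set.Iio n) := by
  intro a ha b hb hab
  simpa [Nat.mod_eq_of_lt ha, Nat.mod_eq_of_lt hb] using congrArg Fin.val hab

def cyclicJumps (n k : ℕ) [NeZero n] : Finset (Fin n) :=
  (Icc 1 k).image fun a : ℕ => (a : Fin n)

variable {k : ℕ}

theorem zero_notMem_cyclicJumps (hk : k < n) : (0 : Fin n) ∉ cyclicJumps n k := by
  simp only [cyclicJumps, mem_image, mem_Icc, not_exists, not_and, and_imp]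
  intro a ha hak h
  have := Nat.eq_zero_of_dvd_of_lt (natCast_eq_zero.mp h) (by omega)
  omega

theorem card_cyclicJumps_union_neg (hk : 2 * k < n) :
    #(cyclicJumps n k ∪ -cyclicJumps n k) = 2 * k := by
  have hcard : #(cyclicJumps n k) = k := by
    rw [cyclicJumps, card_image_of_injOn, Nat.card_Icc, Nat.add_sub_cancel]
    exact natCast_injOn.mono fun a ha => Set.mem_Iio.mpr (by rw [coe_Icc, Set.mem_Icc] at ha; omega)
  have hdisj : Disjoint (cyclicJumps n k) (-cyclicJumps n k) := by
    rw [Finset.disjoint_left]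
    intro _ ha' hb'
    obtain ⟨a, ha, rfl⟩ := mem_image.mp ha'
    obtain ⟨b, hb, hba⟩ := mem_image.mp (mem_neg'.mp hb')
    rw [mem_Icc] at ha hb
    exact natCast_ne_neg_natCast (by omega) (by omega) hba
  rw [card_union_of_disjoint hdisj, card_neg, hcard, two_mul]

theorem natCast_notMem_cyclicJumps_union_neg {m : ℕ} (hkm : k < m) (hmk : m + k < n) :
    (m : Fin n) ∉ cyclicJumps n k ∪ -cyclicJumps n k := by
  rw [mem_union, mem_neg', not_or]
  constructor
  · intro h
    obtain ⟨a, ha, ham⟩ := mem_image.mp h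
    rw [mem_Icc] at ha
    have := natCast_injOn (show a < n by omega) (show m < n by omega) ham
    omega
  · intro h
    obtain ⟨a, ha, ham⟩ := mem_image.mp h
    rw [mem_Icc] at ha
    exact natCast_ne_neg_natCast (by omega) (by omega) ham

end Fin

namespace SimpleGraph

def shiftMatching (n m : ℕ) : SimpleGraph (Fin n) :=
  fromRel fun u v => u.val < m ∧ v.val = u.val + m

variable {n m : ℕ}

theorem shiftMatching_adj_iff {u v : Fin n} : (shiftMatching n m).Adj u v ↔
    (u.val < m ∧ v.val = u.val + m) ∨ (v.val < m ∧ u.val = v.val + m) := by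
  simp only [shiftMatching, fromRel_adj, ne_eq, and_iff_right_iff_imp]
  rintro (h | h) rfl <;> omega

theorem shiftMatching_adj_sub [NeZero n] {u v : Fin n} (h : (shiftMatching n m).Adj u v) :
    v - u = (m : Fin n) ∨ u - v = (m : Fin n) := by
  have key : ∀ a b : Fin n, b.val = a.val + m → b - a = (m : Fin n) := by
    intro a b hab
    rw [sub_eq_iff_eq_add, Fin.ext_iff, Fin.val_add, Fin.val_natCast,
      Nat.mod_eq_of_lt (by omega : m < n), Nat.mod_eq_of_lt (by omega)]
    omega
  rcases shiftMatching_adj_iff.mp h with h | h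
  · exact .inl (key u v h.2)
  · exact .inr (key v u h.2)

theorem degree_shiftMatching (h : 2 * m ≤ n) (v : Fin n)
    [Fintype ((shiftMatching n m).neighborSet v)] :
    (shiftMatching n m).degree v = if v.val < 2 * m then 1 else 0 := by
  split_ifs with hv
  · rw [degree_eq_one_iff_existsUnique_adj]
    refine ⟨⟨if v.val < m then v.val + m else v.val - m, by split_ifs <;> omega⟩, ?_, ?_⟩
    · show (shiftMatching n m).Adj v _
      rw [shiftMatching_adj_iff]
      split_ifs <;> simp <;> omega
    · intro w hw
      rw [shiftMatching_adj_iff] at hw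
      ext
      split_ifs <;> simp <;> omega
  · rw [degree_eq_zero_iff_notMem_support, mem_support]
    rintro ⟨w, hw⟩
    rw [shiftMatching_adj_iff] at hw
    omega

theorem disjoint_circulantGraph_shiftMatching [NeZero n] {s : Finset (Fin n)}
    (hm : (m : Fin n) ∉ s ∪ -s) :
    Disjoint (circulantGraph (s : Set (Fin n))) (shiftMatching n m) := by
  rw [disjoint_left]
  intro u v hc hsm
  rw [circulantGraph_adj] at hc
  apply hm
  rw [mem_union, mem_neg']
  rcases shiftMatching_adj_sub hsm with h | h <;> rw [← h, neg_sub]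
  · exact hc.2.symm
  · exact hc.2

end SimpleGraph

/-- If n ≥ r+2 and n and r are both odd, then the sequence
consisting of n-1 copies of r together with one copy of r-1 is graphic. -/
theorem stmt1 (n r : ℕ) (hn : Odd n) (hr : Odd r) (h : r + 2 ≤ n) :
    IsGraphic (fun i : Fin n => if (i : ℕ) < n - 1 then r else r - 1) := by
  obtain ⟨m, rfl⟩ := hn
  obtain ⟨k, rfl⟩ := hr
  have hdisj : Disjoint (circulantGraph (Fin.cyclicJumps (2 * m + 1) k : Set (Fin (2 * m + 1))))
      (shiftMatching (2 * m + 1) m) :=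
    disjoint_circulantGraph_shiftMatching
      (Fin.natCast_notMem_cyclicJumps_union_neg (by omega) (by omega))
  refine ⟨circulantGraph (Fin.cyclicJumps (2 * m + 1) k) ⊔ shiftMatching (2 * m + 1) m,
    fun v => ?_⟩
  rw [degree_sup_of_disjoint hdisj,
    degree_circulantGraph (Fin.zero_notMem_cyclicJumps (by omega)),
    Fin.card_cyclicJumps_union_neg (by omega), degree_shiftMatching (by omega)]
  dsimp only
  split_ifs <;> omega
end

section
/- If π is a nonincreasing graphic sequence that is potentially K_r ∨ \overline{K_s}-graphic, then there is a realization of π in which the r vertices of the copy of K_r are the r vertices of highest degree and the s vertices of the copy of \overline{K_s} are the next s vertices of highest degree. -/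
/-! Place the copy of `K_r ∨ K̄_s` vertex by vertex. Suppose copy vertices `0, …, k-1` already
sit at positions `0, …, k-1` and copy vertex `k` sits at position `b > k`; the vertex `a` at
position `k` then has `deg b ≤ deg a`, so `a` has at least as many private neighbours as `b`.
Exchanging the adjacencies of `a` and `b` to all private neighbours of `b` and to equally many
private neighbours of `a` keeps every degree, gives `a` all neighbours of `b`, and keeps the common
neighbours of `a` and `b`. Composing the copy with the transposition `(a b)` yields a copy again,
because in `K_r ∨ K̄_s` the neighbourhood of a later vertex lies in that of an earlier one (up to
the earlier vertex itself). -/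

open SimpleGraph
open scoped Classical

/-- The split graph `K_r ∨ K̄_s`: the join of a complete graph on `r` vertices
(the first `r` coordinates) with an edgeless graph on `s` vertices. -/
def splitGraph (r s : ℕ) : SimpleGraph (Fin (r + s)) :=
  SimpleGraph.fromRel (fun a _ => (a : ℕ) < r)

/-- A realization of the sequence `d` containing a copy of `H` as a subgraph. -/
def Potentially {k n : ℕ} (H : SimpleGraph (Fin k)) (d : Fin n → ℕ) : Prop :=
  ∃ G : SimpleGraph (Fin n), (∀ v, G.degree v = d v) ∧
    ∃ f : H →g G, Function.Injective f

open Finset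

namespace SimpleGraph

variable {V : Type*} [DecidableEq V]

/-- For `a, b ∉ T`: `a` and `b` exchange their adjacencies to the vertices of `T`. -/
def exchangeOn (G : SimpleGraph V) (a b : V) (T : Finset V) : SimpleGraph V where
  Adj u v :=
    G.Adj (if v ∈ T then Equiv.swap a b u else u) (if u ∈ T then Equiv.swap a b v else v)
  symm := ⟨fun _ _ h => G.symm.symm _ _ h⟩
  loopless := ⟨fun u h => by split_ifs at h <;> exact G.loopless.irrefl _ h⟩

variable {G : SimpleGraph V} {a b u v : V} {T : Finset V}

lemma exchangeOn_adj : (G.exchangeOn a b T).Adj u v ↔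
    G.Adj (if v ∈ T then Equiv.swap a b u else u) (if u ∈ T then Equiv.swap a b v else v) :=
  Iff.rfl

lemma exchangeOn_adj_of_notMem (hu : u ∉ T) (hv : v ∉ T) :
    (G.exchangeOn a b T).Adj u v ↔ G.Adj u v := by
  simp [exchangeOn_adj, hu, hv]

lemma exchangeOn_adj_of_ne (hua : u ≠ a) (hub : u ≠ b) (hva : v ≠ a) (hvb : v ≠ b) :
    (G.exchangeOn a b T).Adj u v ↔ G.Adj u v := by
  simp [exchangeOn_adj, Equiv.swap_apply_of_ne_of_ne, *]

lemma exchangeOn_adj_left (ha : a ∉ T) (hv : v ∈ T) :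
    (G.exchangeOn a b T).Adj a v ↔ G.Adj b v := by
  simp [exchangeOn_adj, ha, hv]

variable [Fintype V]

lemma neighborFinset_exchangeOn_of_mem (ha : a ∉ T) (hb : b ∉ T) (hu : u ∈ T) :
    (G.exchangeOn a b T).neighborFinset u =
      (G.neighborFinset u).map (Equiv.swap a b).toEmbedding := by
  have hua : u ≠ a := ne_of_mem_of_not_mem hu ha
  have hub : u ≠ b := ne_of_mem_of_not_mem hu hb
  ext v
  simp [exchangeOn_adj, hu, Equiv.swap_apply_of_ne_of_ne hua hub]

lemma degree_exchangeOn (ha : a ∉ T) (hb : b ∉ T)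
    (hT : #(G.neighborFinset a ∩ T) = #(G.neighborFinset b ∩ T)) (u : V) :
    (G.exchangeOn a b T).degree u = G.degree u := by
  by_cases hu : u ∈ T
  · rw [← card_neighborFinset_eq_degree, neighborFinset_exchangeOn_of_mem ha hb hu, card_map,
      card_neighborFinset_eq_degree]
  have hout : (G.exchangeOn a b T).neighborFinset u \ T = G.neighborFinset u \ T := by
    ext v
    by_cases hv : v ∈ T <;> simp [exchangeOn_adj, hu, hv]
  have hin : (G.exchangeOn a b T).neighborFinset u ∩ T =
      G.neighborFinset (Equiv.swap a b u) ∩ T := by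
    ext v
    by_cases hv : v ∈ T <;> simp [exchangeOn_adj, hu, hv]
  have hswap : #(G.neighborFinset (Equiv.swap a b u) ∩ T) = #(G.neighborFinset u ∩ T) := by
    rcases eq_or_ne u a with rfl | hua
    · rw [Equiv.swap_apply_left, hT]
    rcases eq_or_ne u b with rfl | hub
    · rw [Equiv.swap_apply_right, hT]
    · rw [Equiv.swap_apply_of_ne_of_ne hua hub]
  rw [← card_neighborFinset_eq_degree, ← card_neighborFinset_eq_degree,
    ← card_sdiff_add_card_inter _ T, ← card_sdiff_add_card_inter (G.neighborFinset u) T,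
    hout, hin, hswap]

lemma card_neighborFinset_inter_insert (a b : V) :
    #(G.neighborFinset a ∩ insert b (G.neighborFinset b)) =
      #(G.neighborFinset a ∩ G.neighborFinset b) + if G.Adj a b then 1 else 0 := by
  by_cases hab : G.Adj a b
  · rw [inter_insert_of_mem (by simpa using hab), card_insert_of_notMem (by simp), if_pos hab]
  · rw [inter_insert_of_notMem (by simpa using hab), if_neg hab, add_zero]

/-- Exchanging on such a `T` keeps all degrees and makes `a` adjacent to every neighbour
of `b`, while common neighbours of `a` and `b` stay common neighbours. -/
structure IsExchangeSet (G : SimpleGraph V) (a b : V) (T : Finset V) : Prop where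
  left_notMem : a ∉ T
  right_notMem : b ∉ T
  card_neighborFinset_inter : #(G.neighborFinset a ∩ T) = #(G.neighborFinset b ∩ T)
  not_adj_of_adj : ∀ v ∈ T, G.Adj a v → ¬ G.Adj b v
  mem_of_adj : ∀ v, v ≠ a → G.Adj b v → ¬ G.Adj a v → v ∈ T

lemma exists_isExchangeSet (hdeg : G.degree b ≤ G.degree a) : ∃ T, G.IsExchangeSet a b T := by
  set A := G.neighborFinset a \ insert b (G.neighborFinset b)
  set B := G.neighborFinset b \ insert a (G.neighborFinset a)
  have hBA : #B ≤ #A := by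
    rw [card_sdiff, card_sdiff, inter_comm, inter_comm (insert b _),
      card_neighborFinset_inter_insert, card_neighborFinset_inter_insert, inter_comm,
      card_neighborFinset_eq_degree, card_neighborFinset_eq_degree, G.adj_comm b a]
    omega
  obtain ⟨A', hA'A, hA'⟩ := exists_subset_card_eq hBA
  have hA'mem : ∀ v ∈ A', G.Adj a v ∧ v ≠ b ∧ ¬ G.Adj b v := fun v hv => by
    simpa [A] using hA'A hv
  refine ⟨B ∪ A', ?_, ?_, ?_, ?_, ?_⟩
  · simpa [B] using fun h => (hA'mem a h).1.ne rfl
  · simpa [B] using fun h => (hA'mem b h).2.1 rfl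
  · have hA : G.neighborFinset a ∩ (B ∪ A') = A' := by
      ext v; constructor
      · simp +contextual [B]
      · exact fun hv => by simp [hv, (hA'mem v hv).1]
    have hB : G.neighborFinset b ∩ (B ∪ A') = B := by
      ext v; constructor
      · simp only [mem_inter, mem_union, mem_neighborFinset]
        rintro ⟨hbv, hv | hv⟩
        · exact hv
        · exact absurd hbv (hA'mem v hv).2.2
      · simp +contextual [B]
    rw [hA, hB, hA']
  · simp only [mem_union]
    rintro v (hv | hv) hav
    · exact absurd hav (by simp_all [B])
    · exact (hA'mem v hv).2.2
  · simp +contextual [B]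

lemma IsExchangeSet.degree_exchangeOn (hT : G.IsExchangeSet a b T) (u : V) :
    (G.exchangeOn a b T).degree u = G.degree u :=
  SimpleGraph.degree_exchangeOn hT.left_notMem hT.right_notMem hT.card_neighborFinset_inter u

lemma IsExchangeSet.adj_exchangeOn_swap (hT : G.IsExchangeSet a b T) {x : V}
    (hva : v ≠ a) (hvb : v ≠ b) (hxv : G.Adj x v) (hbv : x = a → G.Adj b v) :
    (G.exchangeOn a b T).Adj (Equiv.swap a b x) v := by
  rcases eq_or_ne x a with rfl | hxa
  · rw [Equiv.swap_apply_left, exchangeOn_adj_of_notMem hT.right_notMem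
      fun hvT => hT.not_adj_of_adj v hvT hxv (hbv rfl)]
    exact hbv rfl
  rcases eq_or_ne x b with rfl | hxb
  · rw [Equiv.swap_apply_right]
    by_cases hvT : v ∈ T
    · exact (exchangeOn_adj_left hT.left_notMem hvT).2 hxv
    · rw [exchangeOn_adj_of_notMem hT.left_notMem hvT]
      by_contra hav
      exact hvT (hT.mem_of_adj v hva hxv hav)
  · rw [Equiv.swap_apply_of_ne_of_ne hxa hxb]
    exact (exchangeOn_adj_of_ne hxa hxb hva hvb).2 hxv

theorem Hom.exists_swap_comp {W : Type*} {H : SimpleGraph W} (f : H →g G) {w : W}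
    (hdeg : G.degree (f w) ≤ G.degree a)
    (hN : ∀ z z', f z = a → H.Adj z z' → z' = w ∨ H.Adj w z') :
    ∃ G' : SimpleGraph V, (∀ v, G'.degree v = G.degree v) ∧
      ∃ f' : H →g G', ⇑f' = Equiv.swap a (f w) ∘ f := by
  set b := f w
  obtain ⟨T, hT⟩ := exists_isExchangeSet hdeg
  have hbv : ∀ z z', H.Adj z z' → f z' ≠ b → f z = a → G.Adj b (f z') :=
    fun z z' h hz'b hza => (hN z z' hza h).elim (fun hz' => absurd (congrArg f hz') hz'b) f.map_adj
  refine ⟨G.exchangeOn a b T, hT.degree_exchangeOn,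
    ⟨Equiv.swap a b ∘ f, fun {z z'} h => ?_⟩, rfl⟩
  have hG := f.map_adj h
  simp only [Function.comp_apply]
  by_cases hz' : f z' = a ∨ f z' = b
  · by_cases hz : f z = a ∨ f z = b
    · have hnotMem : ∀ x, x = a ∨ x = b → x ∉ T := by
        rintro x (rfl | rfl)
        exacts [hT.left_notMem, hT.right_notMem]
      have hswap : Equiv.swap a b (f z) = f z' ∧ Equiv.swap a b (f z') = f z := by
        have := hG.ne
        rcases hz with hz | hz <;> rcases hz' with hz' | hz' <;> simp_all
      rw [hswap.1, hswap.2]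
      exact (exchangeOn_adj_of_notMem (hnotMem _ hz') (hnotMem _ hz)).2 hG.symm
    · push Not at hz
      rw [Equiv.swap_apply_of_ne_of_ne hz.1 hz.2]
      exact (hT.adj_exchangeOn_swap hz.1 hz.2 hG.symm (hbv z' z h.symm hz.2)).symm
  · push Not at hz'
    rw [Equiv.swap_apply_of_ne_of_ne hz'.1 hz'.2]
    exact hT.adj_exchangeOn_swap hz'.1 hz'.2 hG (hbv z z' h hz'.2)

end SimpleGraph

lemma splitGraph_adj_of_lt {r s : ℕ} {w z z' : Fin (r + s)} (hwz : w < z)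
    (h : (splitGraph r s).Adj z z') : z' = w ∨ (splitGraph r s).Adj w z' := by
  rw [or_iff_not_imp_left]
  intro hz'w
  simp only [splitGraph, fromRel_adj, ne_eq] at h ⊢
  have : (w : ℕ) < z := hwz
  exact ⟨Ne.symm hz'w, by omega⟩

section

variable {m n : ℕ} {H : SimpleGraph (Fin m)} {d : Fin n → ℕ}

lemma le_val_apply_of_fixing {f : Fin m → Fin n} (hf : Function.Injective f) {k : ℕ}
    (hfix : ∀ u : Fin m, (u : ℕ) < k → ((f u : Fin n) : ℕ) = u) {u : Fin m} (hu : k ≤ u) :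
    k ≤ (f u : ℕ) := by
  by_contra! hlt
  have : (⟨f u, by omega⟩ : Fin m) = u := hf (Fin.ext (hfix _ hlt))
  exact (hlt.trans_le hu).ne (congrArg Fin.val this)

lemma exists_realization_fixing_succ
    (hH : ∀ w z z', w < z → H.Adj z z' → z' = w ∨ H.Adj w z') (hd : Antitone d)
    {k : ℕ} (hk : k < m) {G : SimpleGraph (Fin n)} (hG : ∀ v, G.degree v = d v)
    (f : H →g G) (hf : Function.Injective f)
    (hfix : ∀ u : Fin m, (u : ℕ) < k → ((f u : Fin n) : ℕ) = u) :
    ∃ G' : SimpleGraph (Fin n), (∀ v, G'.degree v = d v) ∧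
      ∃ f' : H →g G', Function.Injective f' ∧
        ∀ u : Fin m, (u : ℕ) < k + 1 → ((f' u : Fin n) : ℕ) = u := by
  set w : Fin m := ⟨k, hk⟩
  rcases (le_val_apply_of_fixing hf hfix le_rfl : k ≤ (f w : ℕ)).eq_or_lt with heq | hlt
  · refine ⟨G, hG, f, hf, fun u hu => ?_⟩
    rcases (Nat.lt_succ_iff_lt_or_eq.1 hu) with hu | hu
    · exact hfix u hu
    · rw [show u = w from Fin.ext hu, ← heq]
  set a : Fin n := ⟨k, hlt.trans (f w).isLt⟩
  have hdeg : G.degree (f w) ≤ G.degree a := by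
    rw [hG, hG]
    exact hd (Fin.le_def.2 hlt.le)
  have hN : ∀ z z', f z = a → H.Adj z z' → z' = w ∨ H.Adj w z' := by
    intro z z' hza
    refine hH w z z' (Fin.lt_def.2 ?_)
    have hzval : ((f z : Fin n) : ℕ) = k := by rw [hza]
    rcases lt_trichotomy (z : ℕ) k with hz | hz | hz
    · have := hfix z hz
      omega
    · rw [show z = w from Fin.ext hz] at hzval
      omega
    · exact hz
  obtain ⟨G', hG', f', hf'⟩ := f.exists_swap_comp hdeg hN
  refine ⟨G', fun v => (hG' v).trans (hG v), f', ?_, fun u hu => ?_⟩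
  · rw [hf']
    exact (Equiv.injective _).comp hf
  rw [hf', Function.comp_apply]
  rcases (Nat.lt_succ_iff_lt_or_eq.1 hu) with hu | hu
  · have hfu := hfix u hu
    have hua : f u ≠ a := Fin.ne_of_val_ne (by rw [hfu]; exact hu.ne)
    have hub : f u ≠ f w := Fin.ne_of_val_ne (by omega)
    rw [Equiv.swap_apply_of_ne_of_ne hua hub, hfu]
  · rw [show u = w from Fin.ext hu, Equiv.swap_apply_right]

lemma exists_realization_fixing_prefix
    (hH : ∀ w z z', w < z → H.Adj z z' → z' = w ∨ H.Adj w z') (hd : Antitone d)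
    (h : Potentially H d) (k : ℕ) :
    ∃ G : SimpleGraph (Fin n), (∀ v, G.degree v = d v) ∧
      ∃ f : H →g G, Function.Injective f ∧
        ∀ u : Fin m, (u : ℕ) < k → ((f u : Fin n) : ℕ) = u := by
  induction k with
  | zero =>
    obtain ⟨G, hG, f, hf⟩ := h
    exact ⟨G, hG, f, hf, fun u hu => absurd hu (Nat.not_lt_zero _)⟩
  | succ k ih =>
    obtain ⟨G, hG, f, hf, hfix⟩ := ih
    by_cases hk : k < m
    · exact exists_realization_fixing_succ hH hd hk hG f hf hfix
    · exact ⟨G, hG, f, hf, fun u hu => hfix u (by omega)⟩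

end

/-- Yin: if a nonincreasing graphic sequence is potentially
`K_r ∨ K̄_s`-graphic, then it has a realization in which the vertices of the
copy of `K_r` are the `r` vertices of highest degree (indices `0,…,r-1` in the
sorted order) and the vertices of the copy of `K̄_s` are the next `s` vertices
of highest degree (indices `r,…,r+s-1`). -/
theorem stmt4 (n r s : ℕ) (d : Fin n → ℕ) (hd : Antitone d)
    (h : Potentially (splitGraph r s) d) :
    ∃ G : SimpleGraph (Fin n), (∀ v, G.degree v = d v) ∧
      ∃ f : splitGraph r s →g G, Function.Injective f ∧
        ∀ u : Fin (r + s), ((f u : Fin n) : ℕ) = (u : ℕ) := by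
  obtain ⟨G, hG, f, hf, hfix⟩ :=
    exists_realization_fixing_prefix (fun _ _ _ => splitGraph_adj_of_lt) hd h (r + s)
  exact ⟨G, hG, f, hf, fun u => hfix u u.isLt⟩
end

section
/- Let H be a graph of order k with at least one edge, let α(H)+1 ≤ i ≤ k, and let ∇_i(H) = min{Δ(F) : F an induced subgraph of H on i vertices}. For n sufficiently large, no realization of the sequence π̃_i(H,n) = ((n-1)^{k-i}, (k-i+∇_i(H)-1)^{n-k+i}) (with the last term reduced by 1 if necessary to make the sum even) contains H as a subgraph. -/
/-!
The first `k - i` vertices of a realization `G` of `π̃_i(H,n)` have degree `n - 1`, so they are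
universal, and every other vertex has degree at most `k - i + ∇_i(H) - 1`. A copy of `H` in `G`
puts at most `k - i` of its vertices on universal ones, so at least `i` of them land elsewhere.
These induce a subgraph of `H` of maximum degree at least `∇_i(H)`, which is positive because
`i > α(H)`. The image `w` of a vertex of maximum degree there is adjacent to the images of its
`∇_i(H)` neighbours and to all `k - i` universal vertices, so `deg w ≥ k - i + ∇_i(H)`:
a contradiction.
-/

open SimpleGraph
open scoped Classical

noncomputable section

/-- The independence number of a graph on `Fin k`. -/
def indepNum {k : ℕ} (H : SimpleGraph (Fin k)) : ℕ :=
  sSup {m | ∃ s : Finset (Fin k), s.card = m ∧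
    ∀ a ∈ s, ∀ b ∈ s, a ≠ b → ¬ H.Adj a b}

/-- `∇_i(H)`: the minimum of the maximum degree over all induced subgraphs of
`H` on `i` vertices. -/
def nabla {k : ℕ} (H : SimpleGraph (Fin k)) (i : ℕ) : ℕ :=
  sInf {m | ∃ s : Finset (Fin k), s.card = i ∧
    (H.induce (↑s : Set (Fin k))).maxDegree = m}

/-- The sequence `π̃_i(H,n) = ((n-1)^{k-i}, (k-i+∇_i(H)-1)^{n-k+i})`, with the
last term reduced by one when the sum of the unadjusted sequence is odd. -/
def tildePi (k i nab n : ℕ) : Fin n → ℕ :=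
  fun j =>
    if (j : ℕ) < k - i then n - 1
    else if (j : ℕ) = n - 1 ∧
        ¬ Even ((k - i) * (n - 1) + (n - (k - i)) * (k - i + nab - 1)) then
      k - i + nab - 1 - 1
    else k - i + nab - 1

open Finset

section Nabla

variable {k : ℕ} (H : SimpleGraph (Fin k))

lemma card_le_indepNum {s : Finset (Fin k)}
    (hs : ∀ a ∈ s, ∀ b ∈ s, a ≠ b → ¬ H.Adj a b) : #s ≤ _root_.indepNum H :=
  le_csSup ⟨k, by rintro _ ⟨t, rfl, -⟩; simpa using t.card_le_univ⟩ ⟨s, rfl, hs⟩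

lemma exists_card_eq_maxDegree_induce_eq_nabla {i : ℕ} (hi : i ≤ k) :
    ∃ s : Finset (Fin k), #s = i ∧ (H.induce (s : Set (Fin k))).maxDegree = nabla H i := by
  obtain ⟨s, -, hs⟩ := exists_subset_card_eq (s := (univ : Finset (Fin k))) (by simpa using hi)
  exact Nat.sInf_mem (s := {m | ∃ s : Finset (Fin k), #s = i ∧
    (H.induce (s : Set (Fin k))).maxDegree = m}) ⟨_, s, hs, rfl⟩

lemma one_le_nabla {i : ℕ} (hi1 : _root_.indepNum H + 1 ≤ i) (hi2 : i ≤ k) :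
    1 ≤ nabla H i := by
  obtain ⟨s, hcard, hmax⟩ := exists_card_eq_maxDegree_induce_eq_nabla H hi2
  by_contra! h
  have hbot : H.induce (s : Set (Fin k)) = ⊥ := maxDegree_eq_zero_iff.1 (by omega)
  have hindep : #s ≤ _root_.indepNum H := card_le_indepNum H fun a ha b hb _ hab => by
    have : (H.induce (s : Set (Fin k))).Adj ⟨a, ha⟩ ⟨b, hb⟩ := by simpa using hab
    simp [hbot] at this
  omega

lemma exists_mem_nabla_le_card_filter_adj {i : ℕ} (hi : 0 < i) {s : Finset (Fin k)}
    (hs : i ≤ #s) : ∃ v ∈ s, nabla H i ≤ #{u ∈ s | H.Adj v u} := by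
  obtain ⟨t, hts, htcard⟩ := exists_subset_card_eq hs
  obtain ⟨a, ha⟩ := card_pos.1 (htcard ▸ hi)
  have : Nonempty (t : Set (Fin k)) := ⟨⟨a, ha⟩⟩
  obtain ⟨v, hv⟩ := (H.induce (t : Set (Fin k))).exists_maximal_degree_vertex
  refine ⟨v, hts v.2, ?_⟩
  calc nabla H i ≤ (H.induce (t : Set (Fin k))).maxDegree := Nat.sInf_le ⟨t, htcard, rfl⟩
    _ = #(((H.induce (t : Set (Fin k))).neighborFinset v).map (Function.Embedding.subtype _)) := by
      rw [card_map, card_neighborFinset_eq_degree, hv]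
    _ ≤ #{u ∈ s | H.Adj v u} := card_le_card fun u hu => by
      obtain ⟨u, hadj, rfl⟩ := mem_map.1 hu
      rw [mem_neighborFinset, comap_adj] at hadj
      exact mem_filter.2 ⟨hts u.2, hadj⟩

end Nabla

lemma card_add_card_le_degree {V : Type*} [Fintype V] (G : SimpleGraph V) [DecidableRel G.Adj]
    {w : V} {A D : Finset V} (hA : ∀ a ∈ A, G.Adj w a) (hD : ∀ d ∈ D, G.Adj w d)
    (hAD : Disjoint A D) : #A + #D ≤ G.degree w := by
  rw [← card_union_of_disjoint hAD, ← card_neighborFinset_eq_degree]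
  exact card_le_card fun x hx => (mem_neighborFinset _ _ _).2 <|
    (mem_union.1 hx).elim (hA x) (hD x)

lemma exists_add_nabla_le_degree_of_injective {k : ℕ} (H : SimpleGraph (Fin k)) {i : ℕ}
    (hi : 0 < i) {V : Type*} [Fintype V] (G : SimpleGraph V) [DecidableRel G.Adj] (f : H →g G)
    (hf : Function.Injective f) (D : Finset V) (hD : ∀ d ∈ D, G.IsUniversal d)
    (hDk : #D + i ≤ k) : ∃ v, f v ∉ D ∧ #D + nabla H i ≤ G.degree (f v) := by
  have hin : #{v | f v ∈ D} ≤ #D :=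
    card_le_card_of_injOn f (fun v hv => (mem_filter.1 hv).2) hf.injOn
  have hs : i ≤ #{v | f v ∉ D} := by
    have := card_filter_add_card_filter_not (s := univ) (p := fun v : Fin k => f v ∈ D)
    simp only [card_univ, Fintype.card_fin] at this
    omega
  obtain ⟨v, hv, hnabla⟩ := exists_mem_nabla_le_card_filter_adj H hi hs
  have hvD : f v ∉ D := (mem_filter.1 hv).2
  refine ⟨v, hvD, ?_⟩
  calc #D + nabla H i
      ≤ #(({u ∈ {v | f v ∉ D} | H.Adj v u} : Finset (Fin k)).map ⟨f, hf⟩) + #D := by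
        rw [card_map]; omega
    _ ≤ G.degree (f v) := by
      refine card_add_card_le_degree G ?_
        (fun d hd => (hD d hd fun h : d = f v => hvD (h ▸ hd)).symm) ?_
      · simp only [mem_map, mem_filter, Function.Embedding.coeFn_mk]
        rintro _ ⟨u, ⟨-, hu⟩, rfl⟩
        exact f.map_adj hu
      · simp only [Finset.disjoint_left, mem_map, mem_filter]
        rintro _ ⟨u, ⟨hu, -⟩, rfl⟩
        exact hu.2

lemma tildePi_of_lt {k i nab n : ℕ} {j : Fin n} (hj : (j : ℕ) < k - i) :
    tildePi k i nab n j = n - 1 :=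
  if_pos hj

lemma tildePi_le_of_le {k i nab n : ℕ} {j : Fin n} (hj : k - i ≤ (j : ℕ)) :
    tildePi k i nab n j ≤ k - i + nab - 1 := by
  unfold tildePi
  split_ifs <;> omega

theorem stmt5_general (k : ℕ) (H : SimpleGraph (Fin k)) (i : ℕ)
    (hi1 : _root_.indepNum H + 1 ≤ i) (hi2 : i ≤ k) :
    ∃ N : ℕ, ∀ n, N ≤ n → ∀ G : SimpleGraph (Fin n),
      (∀ v, G.degree v = tildePi k i (nabla H i) n v) →
      ¬ ∃ f : H →g G, Function.Injective f := by
  refine ⟨k, fun n hkn G hdeg ⟨f, hf⟩ => ?_⟩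
  set D : Finset (Fin n) := {j | (j : ℕ) < k - i}
  have hDcard : #D = k - i := by rw [Fin.card_filter_val_lt, min_eq_right (by omega)]
  have hD : ∀ d ∈ D, G.IsUniversal d := fun d hd => (G.degree_eq_card_sub_one d).1 <| by
    rw [hdeg, Fintype.card_fin, tildePi_of_lt (mem_filter.1 hd).2]
  obtain ⟨v, hvD, hv⟩ :=
    exists_add_nabla_le_degree_of_injective H (i := i) (by omega) G f hf D hD (by omega)
  have hlow := hdeg (f v) ▸ tildePi_le_of_le (nab := nabla H i) (j := f v)
    (by simpa [D] using hvD)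
  have := one_le_nabla H hi1 hi2
  omega

/-- for a graph `H` of order `k` with at least one edge and
`α(H)+1 ≤ i ≤ k`, for `n` sufficiently large no realization of `π̃_i(H,n)`
contains `H` as a subgraph. -/
theorem stmt5 (k : ℕ) (H : SimpleGraph (Fin k)) (hne : H ≠ ⊥) (i : ℕ)
    (hi1 : _root_.indepNum H + 1 ≤ i) (hi2 : i ≤ k) :
    ∃ N : ℕ, ∀ n, N ≤ n → ∀ G : SimpleGraph (Fin n),
      (∀ v, G.degree v = tildePi k i (nabla H i) n v) →
      ¬ ∃ f : H →g G, Function.Injective f :=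
  stmt5_general k H i hi1 hi2
end
end

section
/- Every realization G of the sequence π̃_i(H,n) = ((n-1)^{k-i}, (k-i+∇_i(H)-1)^{n-k+i}) is the join of a complete graph on k-i vertices with a graph on n-k+i vertices of maximum degree ∇_i(H)-1. -/
open SimpleGraph Finset
open scoped Classical

noncomputable section

theorem SimpleGraph.card_filter_neighborFinset_add_card_filter_not {V : Type*} [Fintype V]
    (G : SimpleGraph V) [DecidableRel G.Adj] (v : V) (p : V → Prop) [DecidablePred p]
    (hp : ∀ u, ¬ p u → G.Adj v u) :
    #{u ∈ G.neighborFinset v | p u} + #{u | ¬ p u} = G.degree v := by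
  rw [← card_neighborFinset_eq_degree,
    ← card_filter_add_card_filter_not (s := G.neighborFinset v) (p := p)]
  congr 2
  ext u
  simpa using hp u

/-- Filtering `s : Finset (Fin n)` by a predicate on `ℕ` elaborates by coercing `s` to a
`Finset ℕ` through `Finset`'s monad structure; this undoes the coercion. -/
theorem Finset.card_filter_coe_fin {n : ℕ} (s : Finset (Fin n)) (p : ℕ → Prop) [DecidablePred p] :
    #((↑s : Finset ℕ).filter p) = #(s.filter fun u : Fin n => p u.val) := by
  simp only [bind_def, pure_def, sup_singleton_apply, filter_image]
  convert card_image_of_injective _ Fin.val_injective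

theorem stmt6_general (k i n : ℕ) (H : SimpleGraph (Fin k))
    (G : SimpleGraph (Fin n))
    (hG : ∀ v : Fin n, G.degree v =
      if (v : ℕ) < k - i then n - 1 else k - i + nabla H i - 1) :
    (∀ u v : Fin n, (u : ℕ) < k - i → u ≠ v → G.Adj u v) ∧
    (∀ v : Fin n, k - i ≤ (v : ℕ) →
      ((G.neighborFinset v).filter (fun u => k - i ≤ (u : ℕ))).card =
        nabla H i - 1) := by
  have hclique : ∀ u v : Fin n, (u : ℕ) < k - i → u ≠ v → G.Adj u v := fun u v hu huv =>
    (G.degree_eq_card_sub_one u).1 (by simpa [hu] using hG u) huv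
  refine ⟨hclique, fun v hv => ?_⟩
  have hsplit := G.card_filter_neighborFinset_add_card_filter_not v (fun u => k - i ≤ (u : ℕ))
    fun u hu => (hclique u v (by omega) (by rintro rfl; omega)).symm
  have hlow : #{u : Fin n | ¬ k - i ≤ (u : ℕ)} = k - i := by
    simp only [not_le, Fin.card_filter_val_lt]
    omega
  rw [hlow, hG v, if_neg (by omega)] at hsplit
  rw [card_filter_coe_fin]
  omega

/-- every realization `G` of
`π̃_i(H,n) = ((n-1)^{k-i}, (k-i+∇_i(H)-1)^{n-k+i})` is the join of a complete
graph on `k-i` vertices with a graph on `n-k+i` vertices of maximum degree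
`∇_i(H)-1`: the `k-i` vertices of degree `n-1` are pairwise adjacent and joined
to every other vertex, and every remaining vertex has exactly `∇_i(H)-1`
neighbors among the remaining vertices. -/
theorem stmt6 (k i n : ℕ) (H : SimpleGraph (Fin k)) (hi1 : _root_.indepNum H + 1 ≤ i)
    (hi2 : i ≤ k) (hkn : k ≤ n) (G : SimpleGraph (Fin n))
    (hG : ∀ v : Fin n, G.degree v =
      if (v : ℕ) < k - i then n - 1 else k - i + nabla H i - 1) :
    (∀ u v : Fin n, (u : ℕ) < k - i → u ≠ v → G.Adj u v) ∧
    (∀ v : Fin n, k - i ≤ (v : ℕ) →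
      ((G.neighborFinset v).filter (fun u => k - i ≤ (u : ℕ))).card =
        nabla H i - 1) :=
  stmt6_general k i n H G hG
end
end

section
/- Let G be a realization of a graphic sequence π with a distinguished k-vertex set S, and suppose π is not potentially (K_{k-α} ∨ \overline{K_α})-graphic where α = α(H) and every vertex of G has degree at least k-α. Then the number of vertices w ∈ V(G)∖S with N(w) ⊆ S is at most C(k, k-α)·[2·C(k-α,2) + α - 1]. -/
/-
Let `W` be the set of vertices outside `S` whose neighbourhoods lie in `S`; it is independent.
Each `w ∈ W` has at least `k - α` neighbours, all in `S`. If `|W|` exceeded the bound,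
pigeonhole over the `C(k, k - α)` subsets of `S` of size `k - α` would give one, `T`, contained
in the neighbourhoods of at least `2 C(k - α, 2) + α` vertices of `W`. Every non-edge `uv`
inside `T` is repaired by a degree-preserving 2-switch `uw, vw' ↦ uv, ww'` with fresh
`w, w' ∈ W`. This consumes at most `2 C(k - α, 2)` vertices of `W`, after which `T` is a clique
joined to `α` remaining independent vertices: a `K_{k-α} ∨ K̄_α` in a graph with the degree
sequence of `G`.
-/

open SimpleGraph Finset
open scoped Classical

variable {V : Type*}

lemma Finset.card_offDiag_eq_two_mul_choose_two (T : Finset V) :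
    #T.offDiag = 2 * (#T).choose 2 := by
  rw [offDiag_card, Nat.choose_two_right, Nat.mul_div_cancel' (Nat.even_mul_pred_self _).two_dvd,
    Nat.mul_sub_one]

lemma Finset.exists_common_subset_of_choose_mul_lt_card {ι : Type*} {W : Finset ι}
    {S : Finset V} {N : ι → Finset V} {t m : ℕ} (hN : ∀ w ∈ W, N w ⊆ S ∧ t ≤ #(N w))
    (h : (#S).choose t * m < #W) :
    ∃ T ⊆ S, #T = t ∧ ∃ W' ⊆ W, m < #W' ∧ ∀ w ∈ W', T ⊆ N w := by
  have hsub : ∀ w, ∃ B, w ∈ W → B ⊆ N w ∧ #B = t := fun w =>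
    if hw : w ∈ W then (exists_subset_card_eq (hN w hw).2).imp fun _ hB _ => hB
    else ⟨∅, fun h => absurd h hw⟩
  choose F hF using hsub
  obtain ⟨T, hT, hlt⟩ := exists_lt_card_fiber_of_mul_lt_card_of_maps_to
    (fun w hw => mem_powersetCard.2 ⟨(hF w hw).1.trans (hN w hw).1, (hF w hw).2⟩)
    (by rwa [card_powersetCard])
  obtain ⟨hTS, hTcard⟩ := mem_powersetCard.1 hT
  refine ⟨T, hTS, hTcard, _, filter_subset _ _, hlt, fun w hw => ?_⟩
  obtain ⟨hwW, rfl⟩ := mem_filter.1 hw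
  exact (hF w hwW).1

lemma exists_splitGraph_hom_injective {H : SimpleGraph V} {T W : Finset V}
    (hT : H.IsClique (T : Set V)) (hTW : Disjoint T W)
    (hadj : ∀ t ∈ T, ∀ w ∈ W, H.Adj t w) :
    ∃ f : splitGraph #T #W →g H, Function.Injective f := by
  set xs : Fin #T → V := fun i => T.equivFin.symm i
  set ys : Fin #W → V := fun j => W.equivFin.symm j
  have hxs : ∀ i, xs i ∈ T := fun i => (T.equivFin.symm i).2
  have hys : ∀ j, ys j ∈ W := fun j => (W.equivFin.symm j).2
  refine ⟨⟨Fin.append xs ys, fun {i j} hij => ?_⟩, Fin.append_injective_iff.2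
    ⟨fun i i' h => T.equivFin.symm.injective (Subtype.ext h),
     fun j j' h => W.equivFin.symm.injective (Subtype.ext h),
     fun i j h => Finset.disjoint_left.1 hTW (hxs i)
       (by rw [show xs i = ys j from h]; exact hys j)⟩⟩
  rw [splitGraph, fromRel_adj] at hij
  obtain ⟨hne, hlt⟩ := hij
  induction i using Fin.addCases with
  | left i =>
    induction j using Fin.addCases with
    | left j =>
      simp only [Fin.append_left]
      exact hT (hxs i) (hxs j) fun h => hne (by simp [T.equivFin.symm.injective (Subtype.ext h)])
    | right j => simpa using hadj _ (hxs i) _ (hys j)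
  | right i =>
    induction j using Fin.addCases with
    | left j => simpa using (hadj _ (hxs j) _ (hys i)).symm
    | right j => simp at hlt

namespace SimpleGraph

variable {H : SimpleGraph V} {a b c d : V}

def twoSwitch (H : SimpleGraph V) (a b c d : V) : SimpleGraph V :=
  H.deleteEdges {s(a, b), s(c, d)} ⊔ edge a c ⊔ edge b d

lemma twoSwitch_comm : H.twoSwitch a b c d = H.twoSwitch c d a b := by
  ext x y
  simp only [twoSwitch, sup_adj, deleteEdges_adj, edge_adj, Set.mem_insert_iff,
    Set.mem_singleton_iff, Sym2.eq_iff]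
  tauto

lemma twoSwitch_swap : H.twoSwitch a b c d = H.twoSwitch b a d c := by
  ext x y
  simp only [twoSwitch, sup_adj, deleteEdges_adj, edge_adj, Set.mem_insert_iff,
    Set.mem_singleton_iff, Sym2.eq_iff]
  tauto

lemma twoSwitch_adj_of_ne {v : V} (ha : v ≠ a) (hb : v ≠ b) (hc : v ≠ c) (hd : v ≠ d)
    (w : V) :    (H.twoSwitch a b c d).Adj v w ↔ H.Adj v w := by
  simp [twoSwitch, edge_adj, ha, hb, hc, hd]

lemma twoSwitch_adj_of_ne_right {x y : V} (hxb : x ≠ b) (hyb : y ≠ b) (hxd : x ≠ d)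
    (hyd : y ≠ d) : (H.twoSwitch a b c d).Adj x y ↔ H.Adj x y ∨ (edge a c).Adj x y := by
  simp [twoSwitch, edge_adj, hxb, hyb, hxd, hyd]

noncomputable def nonAdjPairs (H : SimpleGraph V) (T : Finset V) : Finset (V × V) :=
  {p ∈ T.offDiag | ¬H.Adj p.1 p.2}

variable {T : Finset V}

@[simp]
lemma mem_nonAdjPairs {x y : V} :
    (x, y) ∈ H.nonAdjPairs T ↔ x ∈ T ∧ y ∈ T ∧ x ≠ y ∧ ¬H.Adj x y := by
  simp [nonAdjPairs, and_assoc]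

lemma card_nonAdjPairs_le : #(H.nonAdjPairs T) ≤ 2 * (#T).choose 2 :=
  (card_filter_le _ _).trans (T.card_offDiag_eq_two_mul_choose_two).le

lemma isClique_of_nonAdjPairs_eq_empty (h : H.nonAdjPairs T = ∅) : H.IsClique (T : Set V) := by
  intro x hx y hy hxy
  by_contra hadj
  simpa [h] using mem_nonAdjPairs.2 ⟨hx, hy, hxy, hadj⟩

lemma card_nonAdjPairs_twoSwitch {u v w w' : V} (hu : u ∈ T) (hv : v ∈ T) (huv : u ≠ v)
    (hadj : ¬H.Adj u v) (hw : w ∉ T) (hw' : w' ∉ T) :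
    #((H.twoSwitch u w v w').nonAdjPairs T) + 2 = #(H.nonAdjPairs T) := by
  have hswitch : (H.twoSwitch u w v w').nonAdjPairs T =
      ((H.nonAdjPairs T).erase (u, v)).erase (v, u) := by
    ext ⟨x, y⟩
    simp only [mem_erase, mem_nonAdjPairs, ne_eq, Prod.mk.injEq]
    by_cases hxy : x ∈ T ∧ y ∈ T
    · rw [twoSwitch_adj_of_ne_right (ne_of_mem_of_not_mem hxy.1 hw)
        (ne_of_mem_of_not_mem hxy.2 hw) (ne_of_mem_of_not_mem hxy.1 hw')
        (ne_of_mem_of_not_mem hxy.2 hw'), edge_adj]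
      grind [adj_comm]
    · tauto
  have huv_mem : (u, v) ∈ H.nonAdjPairs T := mem_nonAdjPairs.2 ⟨hu, hv, huv, hadj⟩
  have hvu_mem : (v, u) ∈ (H.nonAdjPairs T).erase (u, v) :=
    mem_erase.2 ⟨by simp [huv.symm],
      mem_nonAdjPairs.2 ⟨hv, hu, huv.symm, hadj ∘ Adj.symm⟩⟩
  rw [hswitch, ← card_erase_add_one huv_mem, ← card_erase_add_one hvu_mem]

section Fintype

variable [Fintype V]

lemma neighborFinset_twoSwitch_left (hab : H.Adj a b) (hac : a ≠ c) (had : a ≠ d) :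
    (H.twoSwitch a b c d).neighborFinset a = insert c ((H.neighborFinset a).erase b) := by
  ext y
  simp only [mem_neighborFinset, mem_insert, mem_erase]
  simp only [twoSwitch, sup_adj, deleteEdges_adj, edge_adj, Set.mem_insert_iff,
    Set.mem_singleton_iff, Sym2.eq_iff]
  grind [H.ne_of_adj hab]

lemma degree_twoSwitch_left (hab : H.Adj a b) (hac : ¬H.Adj a c) (hac' : a ≠ c)
    (had : a ≠ d) :
    (H.twoSwitch a b c d).degree a = H.degree a := by
  rw [← card_neighborFinset_eq_degree, ← card_neighborFinset_eq_degree,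
    neighborFinset_twoSwitch_left hab hac' had, card_insert_of_notMem (by simp [hac]),
    card_erase_add_one (by simpa using hab)]

theorem degree_twoSwitch (hab : H.Adj a b) (hcd : H.Adj c d) (hac : ¬H.Adj a c)
    (hbd : ¬H.Adj b d) (hac' : a ≠ c) (hbd' : b ≠ d) (had : a ≠ d) (hbc : b ≠ c) (v : V) :
    (H.twoSwitch a b c d).degree v = H.degree v := by
  by_cases hva : v = a
  · subst hva
    exact degree_twoSwitch_left hab hac hac' had
  by_cases hvb : v = b
  · subst hvb
    rw [twoSwitch_swap]
    exact degree_twoSwitch_left hab.symm hbd hbd' hbc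
  by_cases hvc : v = c
  · subst hvc
    rw [twoSwitch_comm]
    exact degree_twoSwitch_left hcd (fun h => hac h.symm) hac'.symm hbc.symm
  by_cases hvd : v = d
  · subst hvd
    rw [twoSwitch_comm, twoSwitch_swap]
    exact degree_twoSwitch_left hcd.symm (fun h => hbd h.symm) hbd'.symm had.symm
  rw [← card_neighborFinset_eq_degree, ← card_neighborFinset_eq_degree]
  congr 1
  ext w
  simp only [mem_neighborFinset]
  exact twoSwitch_adj_of_ne hva hvb hvc hvd w

theorem exists_degree_eq_splitGraph_hom_injective (α : ℕ) {W : Finset V}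
    (hTW : Disjoint T W) (hW : H.IsIndepSet (W : Set V))
    (hadj : ∀ t ∈ T, ∀ w ∈ W, H.Adj t w)
    (hcard : #(H.nonAdjPairs T) + α ≤ #W) :
    ∃ H' : SimpleGraph V, (∀ v, H'.degree v = H.degree v) ∧
      ∃ f : splitGraph #T α →g H', Function.Injective f := by
  induction hm : #(H.nonAdjPairs T) using Nat.strong_induction_on generalizing H W with
  | _ m ih =>
  obtain hempty | ⟨⟨u, v⟩, huv⟩ := (H.nonAdjPairs T).eq_empty_or_nonempty
  · obtain ⟨W', hW'W, rfl⟩ := exists_subset_card_eq (show α ≤ #W by omega)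
    exact ⟨H, fun _ => rfl, exists_splitGraph_hom_injective
      (isClique_of_nonAdjPairs_eq_empty hempty) (hTW.mono_right hW'W)
      fun t ht w hw => hadj t ht w (hW'W hw)⟩
  obtain ⟨hu, hv, huv, hnadj⟩ := mem_nonAdjPairs.1 huv
  have hnotT : ∀ x ∈ W, x ∉ T := fun x hx hxT => Finset.disjoint_left.1 hTW hxT hx
  have h2 : 2 ≤ #(H.nonAdjPairs T) := by
    have hpair : {(u, v), (v, u)} ⊆ H.nonAdjPairs T := by
      simp [insert_subset_iff, hu, hv, huv, huv.symm, hnadj, adj_comm]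
    simpa [card_pair, huv] using card_le_card hpair
  obtain ⟨w, hw, w', hw', hww'⟩ := one_lt_card.1 (show 1 < #W by omega)
  have hW'W : (W.erase w).erase w' ⊆ W := (erase_subset _ _).trans (erase_subset _ _)
  have hW'adj : ∀ x ∈ (W.erase w).erase w', ∀ y,
      (H.twoSwitch u w v w').Adj x y ↔ H.Adj x y := by
    intro x hx
    obtain ⟨hxw', hxw, hxW⟩ := by simpa only [mem_erase] using hx
    exact twoSwitch_adj_of_ne (ne_of_mem_of_not_mem hu (hnotT x hxW)).symm hxw
      (ne_of_mem_of_not_mem hv (hnotT x hxW)).symm hxw'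
  -- Switching `uw, vw'` to `uv, ww'` keeps all degrees, repairs the non-edge `uv` of `T`,
  -- and uses up `w, w'`; the rest of `W` is untouched, so the invariants persist.
  have hm' := card_nonAdjPairs_twoSwitch hu hv huv hnadj (hnotT w hw) (hnotT w' hw')
  obtain ⟨H', hdeg', hf⟩ := ih _ (by omega) (H := H.twoSwitch u w v w')
    (W := (W.erase w).erase w') (hTW.mono_right hW'W)
    (fun x hx y hy hxy => (hW'adj x hx y).not.2 (hW (hW'W hx) (hW'W hy) hxy))
    (fun t ht x hx => ((hW'adj x hx t).2 (hadj t ht x (hW'W hx)).symm).symm)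
    (by rw [card_erase_of_mem (mem_erase.2 ⟨hww'.symm, hw'⟩), card_erase_of_mem hw]; omega) rfl
  exact ⟨H', fun x => (hdeg' x).trans (degree_twoSwitch (hadj u hu w hw) (hadj v hv w' hw')
    hnadj (hW hw hw' hww') huv hww' (ne_of_mem_of_not_mem hu (hnotT w' hw'))
    (ne_of_mem_of_not_mem hv (hnotT w hw)).symm x), hf⟩

end Fintype

end SimpleGraph

theorem stmt9_general (n k α : ℕ)
    (G : SimpleGraph (Fin n)) (S : Finset (Fin n)) (hS : S.card = k)
    (hmin : ∀ v, k - α ≤ G.degree v)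
    (hnot : ¬ ∃ G' : SimpleGraph (Fin n), (∀ v, G'.degree v = G.degree v) ∧
      ∃ f : splitGraph (k - α) α →g G', Function.Injective f) :
    (Finset.univ.filter
        (fun w : Fin n => w ∉ S ∧ G.neighborFinset w ⊆ S)).card ≤
      Nat.choose k (k - α) * (2 * Nat.choose (k - α) 2 + α - 1) := by
  subst hS
  by_contra! hlarge
  obtain ⟨T, hTS, hT, W, hWW, hW, hTW⟩ := exists_common_subset_of_choose_mul_lt_card
    (N := fun w => G.neighborFinset w) (fun w hw => ⟨(mem_filter.1 hw).2.2,
      (hmin w).trans_eq (G.card_neighborFinset_eq_degree w).symm⟩) hlarge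
  have hWS : ∀ w ∈ W, w ∉ S ∧ G.neighborFinset w ⊆ S := fun w hw =>
    (mem_filter.1 (hWW hw)).2
  rw [← hT] at hnot
  refine hnot (exists_degree_eq_splitGraph_hom_injective (W := W) α ?_ ?_ ?_ ?_)
  · exact Finset.disjoint_left.2 fun x hxT hxW => (hWS x hxW).1 (hTS hxT)
  · exact fun x hx y hy _ hxy =>
      (hWS y hy).1 ((hWS x hx).2 (G.mem_neighborFinset x y |>.2 hxy))
  · exact fun t ht x hx => (G.mem_neighborFinset x t |>.1 (hTW x hx ht)).symm
  · have hpairs := G.card_nonAdjPairs_le (T := T)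
    rw [hT] at hpairs
    omega

/-- let `G` be a realization of a graphic sequence with a
distinguished `k`-vertex set `S`; suppose the degree sequence of `G` is not
potentially `K_{k-α} ∨ K̄_α`-graphic and every vertex of `G` has degree at
least `k - α`.  Then the number of vertices `w ∉ S` with `N(w) ⊆ S` is at most
`C(k, k-α)·(2·C(k-α,2) + α - 1)`. -/
theorem stmt9 (n k α : ℕ) (hα : 1 ≤ α) (hαk : α ≤ k)
    (G : SimpleGraph (Fin n)) (S : Finset (Fin n)) (hS : S.card = k)
    (hmin : ∀ v, k - α ≤ G.degree v)
    (hnot : ¬ ∃ G' : SimpleGraph (Fin n), (∀ v, G'.degree v = G.degree v) ∧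
      ∃ f : splitGraph (k - α) α →g G', Function.Injective f) :
    (Finset.univ.filter
        (fun w : Fin n => w ∉ S ∧ G.neighborFinset w ⊆ S)).card ≤
      Nat.choose k (k - α) * (2 * Nat.choose (k - α) 2 + α - 1) :=
  stmt9_general n k α G S hS hmin hnot
end

section
/- Let k be given. There exists n_0(k) such that for every n ≥ n_0(k), any sequence of n nonnegative integers with maximum term at most k-2, with at least n - k(k-3) positive terms, and with even sum, is graphic. -/
open SimpleGraph Finset
open scoped Classical

lemma degree_eq_card {n : ℕ} (G : SimpleGraph (Fin n)) (v : Fin n)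
    [Fintype (G.neighborSet v)] (s : Finset (Fin n))
    (h : ∀ b, G.Adj v b ↔ b ∈ s) : G.degree v = s.card := by
  unfold SimpleGraph.degree
  congr 1
  ext b
  rw [SimpleGraph.mem_neighborFinset]
  exact h b

lemma degree_irrel {V : Type*} (G : SimpleGraph V) (v : V)
    (i1 i2 : Fintype (G.neighborSet v)) :
    @SimpleGraph.degree V G v i1 = @SimpleGraph.degree V G v i2 := by
  cases Subsingleton.elim i1 i2
  rfl

lemma exists_involution {n : ℕ} (R : Finset (Fin n)) (hR : Even R.card) :
    ∃ f : Fin n → Fin n, ∀ x ∈ R, f x ∈ R ∧ f (f x) = x ∧ f x ≠ x := by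
  obtain ⟨m, hm⟩ := hR
  have hcard : R.card = 2 * m := by omega
  let e : {x // x ∈ R} ≃ Fin (2 * m) := R.equivFinOfCardEq hcard
  let g : Fin (2 * m) → Fin (2 * m) := fun j =>
    ⟨if j.val < m then j.val + m else j.val - m, by have := j.isLt; split <;> omega⟩
  have hg : ∀ j, g (g j) = j := by
    intro j; have := j.isLt
    apply Fin.ext
    simp only [g]
    split <;> split <;> omega
  have hg' : ∀ j, g j ≠ j := by
    intro j h
    have hlt := j.isLt
    have h2 := congrArg Fin.val h
    simp only [g] at h2
    split at h2 <;> omega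
  set f : Fin n → Fin n := fun x => if hx : x ∈ R then (e.symm (g (e ⟨x, hx⟩))).1 else x with hf
  have key : ∀ (s : {y // y ∈ R}), f s.1 = (e.symm (g (e s))).1 := by
    intro s
    rw [hf]
    simp only [dif_pos s.2, Subtype.coe_eta]
  refine ⟨f, fun x hx => ?_⟩
  have h1 : f x = (e.symm (g (e ⟨x, hx⟩))).1 := key ⟨x, hx⟩
  have hmem : f x ∈ R := by rw [h1]; exact (e.symm _).2
  refine ⟨hmem, ?_, ?_⟩
  · rw [h1, key (e.symm (g (e ⟨x, hx⟩))), Equiv.apply_symm_apply, hg, Equiv.symm_apply_apply]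
  · rw [h1]
    intro hcontra
    have h3 : e.symm (g (e ⟨x, hx⟩)) = ⟨x, hx⟩ := Subtype.ext hcontra
    have h4 := congrArg e h3
    rw [Equiv.apply_symm_apply] at h4
    exact hg' _ h4

lemma base_graph {n : ℕ} (d : Fin n → ℕ) (u : Fin n)
    (h1 : ∀ i, i ≠ u → d i ≤ 1)
    (hsum : Even (∑ i, d i))
    (hbig : d u ≤ (univ.filter fun i => i ≠ u ∧ d i = 1).card) :
    IsGraphic d := by
  set Ones : Finset (Fin n) := univ.filter fun i => i ≠ u ∧ d i = 1 with hOnes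
  have hOnes_mem : ∀ i, i ∈ Ones ↔ i ≠ u ∧ d i = 1 := by
    intro i; rw [hOnes]; simp
  obtain ⟨A, hA_sub, hA_card⟩ := Finset.exists_subset_card_eq hbig
  set R : Finset (Fin n) := Ones \ A with hRdef
  have hR_sub : R ⊆ Ones := Finset.sdiff_subset
  have huOnes : u ∉ Ones := by rw [hOnes_mem]; tauto
  have huA : u ∉ A := fun h => huOnes (hA_sub h)
  have huR : u ∉ R := fun h => huOnes (hR_sub h)
  have hAR : ∀ a, a ∈ A → a ∉ R := by
    intro a ha h
    rw [hRdef, Finset.mem_sdiff] at h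
    exact h.2 ha
  have hRA : ∀ a, a ∈ R → a ∉ A := by
    intro a ha h
    exact hAR a h ha
  have hOnes_card : Ones.card = A.card + R.card := by
    rw [hRdef, Finset.card_sdiff_of_subset hA_sub]
    have := Finset.card_le_card hA_sub
    omega
  -- sum splits
  have hsum_split : ∑ i, d i = d u + Ones.card := by
    have h0 : d u + ∑ i ∈ univ.erase u, d i = ∑ i, d i :=
      Finset.add_sum_erase univ d (mem_univ u)
    have h1' : ∑ i ∈ univ.erase u, d i = Ones.card := by
      have hcongr : ∀ i ∈ univ.erase u, d i = if i ∈ Ones then 1 else 0 := by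
        intro i hi
        rw [Finset.mem_erase] at hi
        by_cases hio : i ∈ Ones
        · rw [if_pos hio]
          exact ((hOnes_mem i).1 hio).2
        · rw [if_neg hio]
          rw [hOnes_mem] at hio
          push_neg at hio
          have h2 := hio hi.1
          have h3 := h1 i hi.1
          omega
      rw [Finset.sum_congr rfl hcongr, ← Finset.card_filter]
      congr 1
      ext i
      simp only [Finset.mem_filter, Finset.mem_erase, Finset.mem_univ, true_and, and_true]
      constructor
      · tauto
      · intro hi
        exact ⟨(hOnes_mem i).1 hi |>.1, hi⟩
    omega
  have hReven : Even R.card := by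
    obtain ⟨t, ht⟩ := hsum
    exact ⟨t - d u, by omega⟩
  obtain ⟨f, hf⟩ := exists_involution R hReven
  let G : SimpleGraph (Fin n) :=
    { Adj := fun a b => (a = u ∧ b ∈ A) ∨ (b = u ∧ a ∈ A) ∨ (a ∈ R ∧ b ∈ R ∧ (b = f a ∨ a = f b))
      symm := by constructor; intro a b h; tauto
      loopless := by
        constructor
        intro a h
        rcases h with ⟨h1, h2⟩ | ⟨h1, h2⟩ | ⟨h1, h2, h3 | h3⟩
        · exact huA (h1 ▸ h2)
        · exact huA (h1 ▸ h2)
        · exact (hf a h1).2.2 h3.symm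
        · exact (hf a h1).2.2 h3.symm }
  have hGAdj : ∀ a b, G.Adj a b ↔
      (a = u ∧ b ∈ A) ∨ (b = u ∧ a ∈ A) ∨ (a ∈ R ∧ b ∈ R ∧ (b = f a ∨ a = f b)) :=
    fun _ _ => Iff.rfl
  refine ⟨G, fun v => ?_⟩
  by_cases hvu : v = u
  · subst hvu
    have hs : ∀ b, G.Adj v b ↔ b ∈ A := by
      intro b
      rw [hGAdj]
      constructor
      · rintro (⟨_, hb⟩ | ⟨_, hb⟩ | ⟨hb, _⟩)
        · exact hb
        · exact absurd hb huA
        · exact absurd hb huR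
      · intro hb; exact Or.inl ⟨rfl, hb⟩
    exact ((degree_irrel G v _ _).trans (degree_eq_card G v _ hs)).trans hA_card
  · by_cases hvA : v ∈ A
    · have hd : d v = 1 := ((hOnes_mem v).1 (hA_sub hvA)).2
      have hs : ∀ b, G.Adj v b ↔ b ∈ ({u} : Finset (Fin n)) := by
        intro b
        rw [hGAdj, Finset.mem_singleton]
        constructor
        · rintro (⟨h, _⟩ | ⟨h, _⟩ | ⟨h, _⟩)
          · exact absurd h hvu
          · exact h
          · exact absurd h (hAR v hvA)
        · intro hb; exact Or.inr (Or.inl ⟨hb, hvA⟩)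
      rw [hd]
      exact ((degree_irrel G v _ _).trans (degree_eq_card G v _ hs)).trans
        (Finset.card_singleton u)
    · by_cases hvR : v ∈ R
      · have hd : d v = 1 := ((hOnes_mem v).1 (hR_sub hvR)).2
        have hs : ∀ b, G.Adj v b ↔ b ∈ ({f v} : Finset (Fin n)) := by
          intro b
          rw [hGAdj, Finset.mem_singleton]
          constructor
          · rintro (⟨h, _⟩ | ⟨_, h⟩ | ⟨_, hb, h | h⟩)
            · exact absurd h hvu
            · exact absurd h hvA
            · exact h
            · rw [h, (hf b hb).2.1]
          · intro hb
            refine Or.inr (Or.inr ⟨hvR, ?_, Or.inl hb⟩)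
            rw [hb]; exact (hf v hvR).1
        rw [hd]
        exact ((degree_irrel G v _ _).trans (degree_eq_card G v _ hs)).trans
          (Finset.card_singleton (f v))
      · have hd : d v = 0 := by
          have hv1 := h1 v hvu
          have : v ∉ Ones := fun h =>
            hvR (by rw [hRdef, Finset.mem_sdiff]; exact ⟨h, hvA⟩)
          rw [hOnes_mem] at this
          push_neg at this
          have := this hvu
          omega
        have hs : ∀ b, G.Adj v b ↔ b ∈ (∅ : Finset (Fin n)) := by
          intro b
          rw [hGAdj]
          simp only [Finset.notMem_empty, iff_false]
          rintro (⟨h, _⟩ | ⟨_, h⟩ | ⟨h, _⟩)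
          · exact hvu h
          · exact hvA h
          · exact hvR h
        rw [hd]
        exact ((degree_irrel G v _ _).trans (degree_eq_card G v _ hs)).trans
          Finset.card_empty

lemma add_edge {n : ℕ} (G : SimpleGraph (Fin n)) (u v : Fin n) (huv : u ≠ v)
    (hna : ¬ G.Adj u v) :
    ∃ G' : SimpleGraph (Fin n), ∀ w, G'.degree w =
      G.degree w + (if w = u ∨ w = v then 1 else 0) := by
  have hnb : ¬ G.Adj v u := fun h => hna h.symm
  let G' : SimpleGraph (Fin n) :=
    { Adj := fun a b => G.Adj a b ∨ (a = u ∧ b = v) ∨ (a = v ∧ b = u)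
      symm := by
        constructor
        intro a b h
        rcases h with h | ⟨h1, h2⟩ | ⟨h1, h2⟩
        · exact Or.inl h.symm
        · exact Or.inr (Or.inr ⟨h2, h1⟩)
        · exact Or.inr (Or.inl ⟨h2, h1⟩)
      loopless := by
        constructor
        intro a h
        rcases h with h | ⟨h1, h2⟩ | ⟨h1, h2⟩
        · exact G.loopless.irrefl a h
        · exact huv (h1 ▸ h2 ▸ rfl)
        · exact huv (h2 ▸ h1 ▸ rfl) }
  have hAdj : ∀ a b, G'.Adj a b ↔ G.Adj a b ∨ (a = u ∧ b = v) ∨ (a = v ∧ b = u) :=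
    fun _ _ => Iff.rfl
  refine ⟨G', fun w => ?_⟩
  by_cases hwu : w = u
  · subst hwu
    rw [if_pos (Or.inl rfl)]
    have hs : ∀ b, G'.Adj w b ↔ b ∈ insert v (G.neighborFinset w) := by
      intro b
      rw [hAdj, Finset.mem_insert, SimpleGraph.mem_neighborFinset]
      constructor
      · rintro (h | ⟨_, h⟩ | ⟨h, _⟩)
        · exact Or.inr h
        · exact Or.inl h
        · exact absurd h huv
      · rintro (h | h)
        · exact Or.inr (Or.inl ⟨rfl, h⟩)
        · exact Or.inl h
    refine ((degree_irrel G' w _ _).trans (degree_eq_card G' w _ hs)).trans ?_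
    rw [Finset.card_insert_of_notMem (by rw [SimpleGraph.mem_neighborFinset]; exact hna)]
    rfl
  · by_cases hwv : w = v
    · subst hwv
      rw [if_pos (Or.inr rfl)]
      have hs : ∀ b, G'.Adj w b ↔ b ∈ insert u (G.neighborFinset w) := by
        intro b
        rw [hAdj, Finset.mem_insert, SimpleGraph.mem_neighborFinset]
        constructor
        · rintro (h | ⟨h, _⟩ | ⟨_, h⟩)
          · exact Or.inr h
          · exact absurd h huv.symm
          · exact Or.inl h
        · rintro (h | h)
          · exact Or.inr (Or.inr ⟨rfl, h⟩)
          · exact Or.inl h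
      refine ((degree_irrel G' w _ _).trans (degree_eq_card G' w _ hs)).trans ?_
      rw [Finset.card_insert_of_notMem (by rw [SimpleGraph.mem_neighborFinset]; exact hnb)]
      rfl
    · rw [if_neg (by tauto)]
      have hs : ∀ b, G'.Adj w b ↔ b ∈ G.neighborFinset w := by
        intro b
        rw [hAdj, SimpleGraph.mem_neighborFinset]
        constructor
        · rintro (h | ⟨h, _⟩ | ⟨h, _⟩)
          · exact h
          · exact absurd h hwu
          · exact absurd h hwv
        · exact Or.inl
      exact ((degree_irrel G' w _ _).trans (degree_eq_card G' w _ hs)).trans (Nat.add_zero _).symm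

lemma swap_edge {n : ℕ} (G : SimpleGraph (Fin n)) (u v x y : Fin n)
    (huv : G.Adj u v) (hxy : G.Adj x y)
    (hux : ¬ G.Adj u x) (hvy : ¬ G.Adj v y)
    (hxu : x ≠ u) (hxv : x ≠ v) (hyu : y ≠ u) (hyv : y ≠ v) :
    ∃ G' : SimpleGraph (Fin n), (∀ w, G'.degree w = G.degree w) ∧ ¬ G'.Adj u v := by
  have hune : u ≠ v := huv.ne
  have hxne : x ≠ y := hxy.ne
  have hxus : ¬ G.Adj x u := fun h => hux h.symm
  have hyvs : ¬ G.Adj y v := fun h => hvy h.symm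
  let F : Fin n → Fin n → Prop := fun a b =>
    (G.Adj a b ∧ ¬((a = u ∧ b = v) ∨ (a = v ∧ b = u)) ∧ ¬((a = x ∧ b = y) ∨ (a = y ∧ b = x)))
    ∨ ((a = u ∧ b = x) ∨ (a = x ∧ b = u))
    ∨ ((a = v ∧ b = y) ∨ (a = y ∧ b = v))
  let G' : SimpleGraph (Fin n) :=
    { Adj := F
      symm := by
        constructor
        intro a b h
        rcases h with ⟨h1, h2, h3⟩ | h | h
        · exact Or.inl ⟨h1.symm, by tauto, by tauto⟩
        · exact Or.inr (Or.inl (by tauto))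
        · exact Or.inr (Or.inr (by tauto))
      loopless := by
        constructor
        intro a h
        rcases h with ⟨h1, _, _⟩ | h | h
        · exact G.loopless.irrefl a h1
        · rcases h with ⟨h1, h2⟩ | ⟨h1, h2⟩ <;> exact hxu.symm (h1 ▸ h2 ▸ rfl) |>.elim
        · rcases h with ⟨h1, h2⟩ | ⟨h1, h2⟩ <;> exact hyv.symm (h1 ▸ h2 ▸ rfl) |>.elim }
  have hAdj : ∀ a b, G'.Adj a b ↔ F a b := fun _ _ => Iff.rfl
  refine ⟨G', fun w => ?_, ?_⟩
  swap
  · rw [hAdj]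
    rintro (⟨_, h2, _⟩ | (⟨_, h⟩ | ⟨h, _⟩) | (⟨_, h⟩ | ⟨h, _⟩))
    · exact h2 (Or.inl ⟨rfl, rfl⟩)
    · exact hxv h.symm
    · exact hxu h.symm
    · exact hyv h.symm
    · exact hyu h.symm
  by_cases hwu : w = u
  · subst hwu
    have hs : ∀ b, G'.Adj w b ↔ b ∈ insert x ((G.neighborFinset w).erase v) := by
      intro b
      rw [hAdj, Finset.mem_insert, Finset.mem_erase, SimpleGraph.mem_neighborFinset]
      constructor
      · rintro (⟨h1, h2, h3⟩ | (⟨_, h⟩ | ⟨h, _⟩) | (⟨h, _⟩ | ⟨h, _⟩))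
        · refine Or.inr ⟨?_, h1⟩
          intro hb
          exact h2 (Or.inl ⟨rfl, hb⟩)
        · exact Or.inl h
        · exact absurd h.symm hxu
        · exact absurd h hune
        · exact absurd h.symm hyu
      · rintro (h | ⟨h1, h2⟩)
        · exact Or.inr (Or.inl (Or.inl ⟨rfl, h⟩))
        · refine Or.inl ⟨h2, ?_, ?_⟩
          · rintro (⟨_, h⟩ | ⟨h, _⟩)
            · exact h1 h
            · exact hune h
          · rintro (⟨h, _⟩ | ⟨_, h⟩)
            · exact hxu h.symm
            · exact hux (h ▸ h2)
    refine ((degree_irrel G' w _ _).trans (degree_eq_card G' w _ hs)).trans ?_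
    rw [Finset.card_insert_of_notMem (by
        rw [Finset.mem_erase, SimpleGraph.mem_neighborFinset]
        intro h
        exact hux h.2),
      Finset.card_erase_of_mem (by rw [SimpleGraph.mem_neighborFinset]; exact huv)]
    have hpos : 0 < (G.neighborFinset w).card :=
      Finset.card_pos.mpr ⟨v, by rw [SimpleGraph.mem_neighborFinset]; exact huv⟩
    have hdd : G.degree w = (G.neighborFinset w).card := rfl
    omega
  · by_cases hwv : w = v
    · subst hwv
      have hs : ∀ b, G'.Adj w b ↔ b ∈ insert y ((G.neighborFinset w).erase u) := by
        intro b
        rw [hAdj, Finset.mem_insert, Finset.mem_erase, SimpleGraph.mem_neighborFinset]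
        constructor
        · rintro (⟨h1, h2, h3⟩ | (⟨h, _⟩ | ⟨h, _⟩) | (⟨_, h⟩ | ⟨h, _⟩))
          · refine Or.inr ⟨?_, h1⟩
            intro hb
            exact h2 (Or.inr ⟨rfl, hb⟩)
          · exact absurd h hune.symm
          · exact absurd h.symm hxv
          · exact Or.inl h
          · exact absurd h.symm hyv
        · rintro (h | ⟨h1, h2⟩)
          · exact Or.inr (Or.inr (Or.inl ⟨rfl, h⟩))
          · refine Or.inl ⟨h2, ?_, ?_⟩
            · rintro (⟨h, _⟩ | ⟨_, h⟩)
              · exact hune h.symm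
              · exact h1 h
            · rintro (⟨h, _⟩ | ⟨h, _⟩)
              · exact hxv h.symm
              · exact hyv h.symm
      refine ((degree_irrel G' w _ _).trans (degree_eq_card G' w _ hs)).trans ?_
      rw [Finset.card_insert_of_notMem (by
          rw [Finset.mem_erase, SimpleGraph.mem_neighborFinset]
          intro h
          exact hvy h.2),
        Finset.card_erase_of_mem (by rw [SimpleGraph.mem_neighborFinset]; exact huv.symm)]
      have hpos : 0 < (G.neighborFinset w).card :=
        Finset.card_pos.mpr ⟨u, by rw [SimpleGraph.mem_neighborFinset]; exact huv.symm⟩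
      have hdd : G.degree w = (G.neighborFinset w).card := rfl
      omega
    · by_cases hwx : w = x
      · subst hwx
        have hs : ∀ b, G'.Adj w b ↔ b ∈ insert u ((G.neighborFinset w).erase y) := by
          intro b
          rw [hAdj, Finset.mem_insert, Finset.mem_erase, SimpleGraph.mem_neighborFinset]
          constructor
          · rintro (⟨h1, h2, h3⟩ | (⟨h, _⟩ | ⟨_, h⟩) | (⟨h, _⟩ | ⟨h, _⟩))
            · refine Or.inr ⟨?_, h1⟩
              intro hb
              exact h3 (Or.inl ⟨rfl, hb⟩)
            · exact absurd h hxu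
            · exact Or.inl h
            · exact absurd h hxv
            · exact absurd h hxne
          · rintro (h | ⟨h1, h2⟩)
            · exact Or.inr (Or.inl (Or.inr ⟨rfl, h⟩))
            · refine Or.inl ⟨h2, ?_, ?_⟩
              · rintro (⟨h, _⟩ | ⟨h, _⟩)
                · exact hxu h
                · exact hxv h
              · rintro (⟨_, h⟩ | ⟨h, _⟩)
                · exact h1 h
                · exact hxne h
        refine ((degree_irrel G' w _ _).trans (degree_eq_card G' w _ hs)).trans ?_
        rw [Finset.card_insert_of_notMem (by
            rw [Finset.mem_erase, SimpleGraph.mem_neighborFinset]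
            intro h
            exact hxus h.2),
          Finset.card_erase_of_mem (by rw [SimpleGraph.mem_neighborFinset]; exact hxy)]
        have hpos : 0 < (G.neighborFinset w).card :=
          Finset.card_pos.mpr ⟨y, by rw [SimpleGraph.mem_neighborFinset]; exact hxy⟩
        have hdd : G.degree w = (G.neighborFinset w).card := rfl
        omega
      · by_cases hwy : w = y
        · subst hwy
          have hs : ∀ b, G'.Adj w b ↔ b ∈ insert v ((G.neighborFinset w).erase x) := by
            intro b
            rw [hAdj, Finset.mem_insert, Finset.mem_erase, SimpleGraph.mem_neighborFinset]
            constructor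
            · rintro (⟨h1, h2, h3⟩ | (⟨h, _⟩ | ⟨h, _⟩) | (⟨h, _⟩ | ⟨_, h⟩))
              · refine Or.inr ⟨?_, h1⟩
                intro hb
                exact h3 (Or.inr ⟨rfl, hb⟩)
              · exact absurd h hyu
              · exact absurd h hxne.symm
              · exact absurd h hyv
              · exact Or.inl h
            · rintro (h | ⟨h1, h2⟩)
              · exact Or.inr (Or.inr (Or.inr ⟨rfl, h⟩))
              · refine Or.inl ⟨h2, ?_, ?_⟩
                · rintro (⟨h, _⟩ | ⟨h, _⟩)
                  · exact hyu h
                  · exact hyv h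
                · rintro (⟨h, _⟩ | ⟨_, h⟩)
                  · exact hxne h.symm
                  · exact h1 h
          refine ((degree_irrel G' w _ _).trans (degree_eq_card G' w _ hs)).trans ?_
          rw [Finset.card_insert_of_notMem (by
              rw [Finset.mem_erase, SimpleGraph.mem_neighborFinset]
              intro h
              exact hyvs h.2),
            Finset.card_erase_of_mem (by rw [SimpleGraph.mem_neighborFinset]; exact hxy.symm)]
          have hpos : 0 < (G.neighborFinset w).card :=
            Finset.card_pos.mpr ⟨x, by rw [SimpleGraph.mem_neighborFinset]; exact hxy.symm⟩
          have hdd : G.degree w = (G.neighborFinset w).card := rfl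
          omega
        · have hs : ∀ b, G'.Adj w b ↔ b ∈ G.neighborFinset w := by
            intro b
            rw [hAdj, SimpleGraph.mem_neighborFinset]
            constructor
            · rintro (⟨h1, _, _⟩ | (⟨h, _⟩ | ⟨h, _⟩) | (⟨h, _⟩ | ⟨h, _⟩))
              · exact h1
              · exact absurd h hwu
              · exact absurd h hwx
              · exact absurd h hwv
              · exact absurd h hwy
            · intro h
              refine Or.inl ⟨h, ?_, ?_⟩
              · rintro (⟨h1, _⟩ | ⟨h1, _⟩)
                · exact hwu h1
                · exact hwv h1
              · rintro (⟨h1, _⟩ | ⟨h1, _⟩)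
                · exact hwx h1
                · exact hwy h1
          exact (degree_irrel G' w _ _).trans (degree_eq_card G' w _ hs)

lemma exists_edge_avoiding {n : ℕ} (G : SimpleGraph (Fin n)) (T : Finset (Fin n)) (D : ℕ)
    (hdeg : ∀ w, G.degree w ≤ D)
    (hbig : 2 * T.card * D < ∑ w, G.degree w) :
    ∃ x y, G.Adj x y ∧ x ∉ T ∧ y ∉ T := by
  by_contra hcon
  push_neg at hcon
  -- hcon : ∀ x y, G.Adj x y → x ∉ T → y ∈ T
  have hdegcard : ∀ w, G.degree w = (univ.filter (G.Adj w)).card := by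
    intro w
    rw [SimpleGraph.degree, SimpleGraph.neighborFinset_eq_filter]
  have hT : ∑ w ∈ T, G.degree w ≤ T.card * D :=
    le_trans (Finset.sum_le_card_nsmul T _ D (fun w _ => hdeg w)) (by rw [smul_eq_mul])
  have hout : ∑ w ∈ univ \ T, G.degree w ≤ ∑ t ∈ T, G.degree t := by
    have h1 : ∀ w ∈ univ \ T, G.degree w = (T.filter (G.Adj w)).card := by
      intro w hw
      rw [Finset.mem_sdiff] at hw
      rw [hdegcard w]
      congr 1
      ext b
      simp only [Finset.mem_filter, Finset.mem_univ, true_and]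
      constructor
      · intro hb
        exact ⟨hcon w b hb hw.2, hb⟩
      · tauto
    rw [Finset.sum_congr rfl h1]
    have h2 : ∑ w ∈ univ \ T, (T.filter (G.Adj w)).card
        = ∑ t ∈ T, ((univ \ T).filter (fun w => G.Adj w t)).card := by
      simp only [Finset.card_filter]
      rw [Finset.sum_comm]
    rw [h2]
    apply Finset.sum_le_sum
    intro t ht
    rw [hdegcard t]
    apply Finset.card_le_card
    intro b hb
    simp only [Finset.mem_filter, Finset.mem_univ, true_and] at hb ⊢
    exact hb.2.symm
  have htotal : ∑ w, G.degree w = ∑ w ∈ univ \ T, G.degree w + ∑ w ∈ T, G.degree w :=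
    (Finset.sum_sdiff (Finset.subset_univ T)).symm
  rw [mul_assoc] at hbig
  omega

lemma main_lemma (D : ℕ) : ∀ S : ℕ, ∀ {n : ℕ} (d : Fin n → ℕ), ∑ i, d i = S →
    Even (∑ i, d i) → (∀ i, d i ≤ D) →
    4 * D * D + 4 * D + 3 ≤ (univ.filter fun i => 0 < d i).card → IsGraphic d := by
  intro S
  induction S using Nat.strong_induction_on with
  | _ S IH =>
  intro n d hS heven hle hpos
  by_cases hex : ∃ u v : Fin n, u ≠ v ∧ 2 ≤ d u ∧ 2 ≤ d v
  · obtain ⟨u, v, huv, h2u, h2v⟩ := hex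
    set d' : Fin n → ℕ := fun i => if i = u ∨ i = v then d i - 1 else d i with hd'
    have hd'u : d' u = d u - 1 := by rw [hd']; simp
    have hd'v : d' v = d v - 1 := by rw [hd']; simp
    have hd'w : ∀ w, w ≠ u → w ≠ v → d' w = d w := by
      intro w h1 h2
      rw [hd']
      simp [h1, h2]
    have hpoint : ∀ i, d i = d' i + (if i = u ∨ i = v then 1 else 0) := by
      intro i
      by_cases h : i = u ∨ i = v
      · rw [if_pos h]
        rcases h with h | h <;> subst h
        · rw [hd'u]; omega
        · rw [hd'v]; omega
      · rw [if_neg h]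
        push_neg at h
        rw [hd'w i h.1 h.2]
        omega
    have hsum2 : ∑ i, d i = (∑ i, d' i) + 2 := by
      rw [Finset.sum_congr rfl (fun i _ => hpoint i), Finset.sum_add_distrib]
      congr 1
      rw [← Finset.card_filter]
      have : (univ.filter fun i => i = u ∨ i = v) = {u, v} := by
        ext i
        simp [Finset.mem_insert]
      rw [this, Finset.card_pair huv]
    have hS2 : ∑ i, d' i = S - 2 := by omega
    have hSpos : 2 ≤ S := by omega
    have heven' : Even (∑ i, d' i) := by
      obtain ⟨t, ht⟩ := heven
      exact ⟨t - 1, by omega⟩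
    have hle' : ∀ i, d' i ≤ D := by
      intro i
      have := hpoint i
      have := hle i
      omega
    have hposeq : (univ.filter fun i => 0 < d' i) = (univ.filter fun i => 0 < d i) := by
      ext i
      simp only [Finset.mem_filter, Finset.mem_univ, true_and]
      by_cases h : i = u ∨ i = v
      · rcases h with h | h <;> subst h
        · rw [hd'u]; omega
        · rw [hd'v]; omega
      · push_neg at h
        rw [hd'w i h.1 h.2]
    have hpos' : 4 * D * D + 4 * D + 3 ≤ (univ.filter fun i => 0 < d' i).card := by
      rw [hposeq]; exact hpos
    obtain ⟨G₀, hG₀⟩ := IH (S - 2) (by omega) d' (by omega) heven' hle' hpos'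
    -- get a realization of d' in which u, v are non-adjacent
    have hG1 : ∃ G₁ : SimpleGraph (Fin n), (∀ w, G₁.degree w = d' w) ∧ ¬ G₁.Adj u v := by
      by_cases hadj : G₀.Adj u v
      · set T : Finset (Fin n) :=
          insert u (G₀.neighborFinset u) ∪ insert v (G₀.neighborFinset v) with hT
        have hTcard : T.card ≤ 2 * D + 2 := by
          calc T.card ≤ (insert u (G₀.neighborFinset u)).card
              + (insert v (G₀.neighborFinset v)).card := Finset.card_union_le _ _
            _ ≤ (G₀.neighborFinset u).card + 1 + ((G₀.neighborFinset v).card + 1) := by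
                have := Finset.card_insert_le u (G₀.neighborFinset u)
                have := Finset.card_insert_le v (G₀.neighborFinset v)
                omega
            _ ≤ 2 * D + 2 := by
                have h1 : (G₀.neighborFinset u).card = d' u := hG₀ u
                have h2 : (G₀.neighborFinset v).card = d' v := hG₀ v
                have := hle' u
                have := hle' v
                omega
        have hdegsum : ∑ w, G₀.degree w = ∑ i, d' i := Finset.sum_congr rfl fun i _ => hG₀ i
        have hcardsum : (univ.filter fun i => 0 < d' i).card ≤ ∑ i, d' i := by
          calc (univ.filter fun i => 0 < d' i).card
              = ∑ i ∈ univ.filter (fun i => 0 < d' i), 1 := by rw [Finset.card_eq_sum_ones]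
            _ ≤ ∑ i ∈ univ.filter (fun i => 0 < d' i), d' i :=
                Finset.sum_le_sum fun i hi => by
                  simp only [Finset.mem_filter] at hi
                  omega
            _ ≤ ∑ i, d' i := Finset.sum_le_sum_of_subset (Finset.filter_subset _ _)
        obtain ⟨x, y, hxy, hxT, hyT⟩ := exists_edge_avoiding G₀ T D
          (fun w => by rw [hG₀ w]; exact hle' w)
          (by
            rw [hdegsum]
            have : 2 * T.card * D ≤ 2 * (2 * D + 2) * D := by
              apply Nat.mul_le_mul_right
              omega
            nlinarith [hpos', hcardsum])
        have huT : u ∈ T := by rw [hT]; simp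
        have hvT : v ∈ T := by rw [hT]; simp
        have hxu : x ≠ u := fun h => hxT (h ▸ huT)
        have hxv : x ≠ v := fun h => hxT (h ▸ hvT)
        have hyu : y ≠ u := fun h => hyT (h ▸ huT)
        have hyv : y ≠ v := fun h => hyT (h ▸ hvT)
        have hux : ¬ G₀.Adj u x := fun h => hxT (by
          rw [hT]
          simp only [Finset.mem_union, Finset.mem_insert, SimpleGraph.mem_neighborFinset]
          exact Or.inl (Or.inr h))
        have hvy : ¬ G₀.Adj v y := fun h => hyT (by
          rw [hT]
          simp only [Finset.mem_union, Finset.mem_insert, SimpleGraph.mem_neighborFinset]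
          exact Or.inr (Or.inr h))
        obtain ⟨G₁, hdeg1, hnadj1⟩ := swap_edge G₀ u v x y hadj hxy hux hvy hxu hxv hyu hyv
        exact ⟨G₁, fun w => (hdeg1 w).trans (hG₀ w), hnadj1⟩
      · exact ⟨G₀, hG₀, hadj⟩
    obtain ⟨G₁, hG₁, hnadj⟩ := hG1
    obtain ⟨G₂, hG₂⟩ := add_edge G₁ u v huv hnadj
    refine ⟨G₂, fun w => ?_⟩
    rw [hG₂ w, hG₁ w, ← hpoint w]
  · -- no two vertices of degree ≥ 2
    push_neg at hex
    have hcardn : (univ.filter fun i => 0 < d i).card ≤ n := by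
      have h1 := Finset.card_filter_le (univ : Finset (Fin n)) (fun i => 0 < d i)
      simpa using h1
    have hn : 0 < n := by omega
    -- find the special vertex u
    have hu : ∃ u : Fin n, ∀ i, i ≠ u → d i ≤ 1 := by
      by_cases hw : ∃ w, 2 ≤ d w
      · obtain ⟨w, hw2⟩ := hw
        refine ⟨w, fun i hi => ?_⟩
        by_contra hc
        push_neg at hc
        have h3 := hex i w hi
        have h4 := h3 (by omega)
        omega
      · push_neg at hw
        refine ⟨⟨0, hn⟩, fun i _ => ?_⟩
        have := hw i
        omega
    obtain ⟨u, hu1⟩ := hu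
    apply base_graph d u hu1 heven
    -- d u ≤ number of ones distinct from u
    have hsub : (univ.filter fun i => 0 < d i).erase u ⊆
        univ.filter fun i => i ≠ u ∧ d i = 1 := by
      intro i hi
      rw [Finset.mem_erase, Finset.mem_filter] at hi
      rw [Finset.mem_filter]
      have := hu1 i hi.1
      exact ⟨Finset.mem_univ i, hi.1, by omega⟩
    have hcard1 : (univ.filter fun i => 0 < d i).card - 1 ≤
        (univ.filter fun i => i ≠ u ∧ d i = 1).card := by
      calc (univ.filter fun i => 0 < d i).card - 1
          ≤ ((univ.filter fun i => 0 < d i).erase u).card := by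
            rw [Finset.card_erase_eq_ite]
            split <;> omega
        _ ≤ _ := Finset.card_le_card hsub
    have hDu : d u ≤ D := hle u
    have : D ≤ 4 * D * D + 4 * D + 2 := by nlinarith
    omega

/-- for every `k` there is `n₀` such that for all `n ≥ n₀`, any
sequence of `n` nonnegative integers with maximum term at most `k-2`, at least
`n - k(k-3)` positive terms, and even sum, is graphic. -/
theorem stmt18 (k : ℕ) :
    ∃ n₀ : ℕ, ∀ n, n₀ ≤ n → ∀ d : Fin n → ℕ,
      (∀ i, d i ≤ k - 2) →
      n - k * (k - 3) ≤ (Finset.univ.filter (fun i => 0 < d i)).card →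
      Even (∑ i, d i) →
      IsGraphic d := by
  refine ⟨k * (k - 3) + (4 * (k - 2) * (k - 2) + 4 * (k - 2) + 3),
    fun n hn d hled hpos heven => ?_⟩
  have h2 : 4 * (k - 2) * (k - 2) + 4 * (k - 2) + 3 ≤ n - k * (k - 3) := by
    have h3 := Nat.sub_le_sub_right hn (k * (k - 3))
    rwa [Nat.add_sub_cancel_left] at h3
  exact main_lemma (k - 2) (∑ i, d i) d rfl heven hled (le_trans h2 hpos)
end
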